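/- arXiv:2501.06883 — 3 statements merged into one kernel-verified Lean document; each statement's English description precedes it below -/
import Mathlib

section
/- Let p be a prime and let g(x) = b_e x^e + ⋯ + b_0 ∈ ℚ[x] have degree e ≥ 1 with b_0 ≠ 0, ν_p(b_e) = 0, and ν_p(b_i) ≥ 1 for every 0 ≤ i ≤ e−1 with b_i ≠ 0; suppose NP_p(g) has successive vertices (0,0), (e−m_1, r_1), …, (e−m_{t−1}, r_{t−1}), (e, r_t), where e = m_0 > m_1 > ⋯ > m_t = 0 and r_i = ν_p(b_{m_i}), with slopes λ_i = (r_i − r_{i−1})/(m_{i−1} − m_i). Let f(x) = A_d x^d + ⋯ + A_0 ∈ ℚ[x] have degree d ≥ 1 with ν_p(A_d) = 0, let λ = min{ ν_p(A_i)/(d−i) : 0 ≤ i < d, A_i ≠ 0 } and assume λ ≥ λ_1, and assume either (i) r_t < λ_1(d+e−1), or (ii) r_t = λ_1(d+e−1) together with (f(0) = 0 or ν_p(f(0)) > dλ or λ > λ_1). Fix n ≥ 0 and suppose NP_p(g ∘ f^n) has successive vertices (0,0), (d^n(e−m_1), r_1), …, (d^n(e−m_{t−1}), r_{t−1}), (d^n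 e, r_t). Write (g ∘ f^{n+1})(x) = Σ_{k=0}^{d^{n+1}e} C_k x^k. Then for every 0 ≤ s < t and every integer k with 0 ≤ k ≤ d^{n+1} m_s and C_k ≠ 0, one has ν_p(C_k) ≥ r_{s+1} + λ_{s+1}·(m_{s+1} − k/d^{n+1}). -/
open Polynomial

/-- The `n`-th compositional iterate of `f`: `f^0 = X`, `f^{n+1} = f ∘ f^n`. -/
noncomputable def polyIter (f : Polynomial ℚ) : ℕ → Polynomial ℚ
  | 0 => Polynomial.X
  | n + 1 => f.comp (polyIter f n)

/-- The `p`-adic valuation of a rational number, viewed as a rational number. -/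
def nuQ (p : ℕ) (x : ℚ) : ℚ := (padicValRat p x : ℚ)

/-- `NP_p(h)` has successive vertices `(xs 0, ys 0), …, (xs t, ys t)`:
the corresponding coefficients are nonzero and have the prescribed valuations,
the slopes are strictly increasing, and every point of the Newton diagram lies
on or above the polygon. -/
def HasNPVertices (p : ℕ) (h : Polynomial ℚ) (t : ℕ) (xs : ℕ → ℕ) (ys : ℕ → ℚ) : Prop :=
  h.coeff 0 ≠ 0 ∧
  xs 0 = 0 ∧ xs t = h.natDegree ∧
  (∀ s, s < t → xs s < xs (s + 1)) ∧
  (∀ s, s ≤ t → h.coeff (h.natDegree - xs s) ≠ 0 ∧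
      nuQ p (h.coeff (h.natDegree - xs s)) = ys s) ∧
  (∀ s, 1 ≤ s → s < t →
      (ys s - ys (s - 1)) / ((xs s : ℚ) - (xs (s - 1) : ℚ)) <
        (ys (s + 1) - ys s) / ((xs (s + 1) : ℚ) - (xs s : ℚ))) ∧
  (∀ s, 1 ≤ s → s ≤ t → ∀ i, h.coeff i ≠ 0 →
      xs (s - 1) ≤ h.natDegree - i → h.natDegree - i ≤ xs s →
      ys (s - 1) + ((ys s - ys (s - 1)) / ((xs s : ℚ) - (xs (s - 1) : ℚ))) *
          (((h.natDegree - i : ℕ) : ℚ) - (xs (s - 1) : ℚ)) ≤ nuQ p (h.coeff i))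

/-- The number of irreducible factors of a polynomial over `ℚ`,
counted with multiplicity. -/
noncomputable def numFactors (P : Polynomial ℚ) : ℕ :=
  (UniqueFactorizationMonoid.factors P).card

/-- `f` is `p^r`-pure. -/
def IsPpure (p r : ℕ) (f : Polynomial ℚ) : Prop :=
  f.coeff 0 ≠ 0 ∧
  padicValRat p f.leadingCoeff = 0 ∧
  padicValRat p (f.coeff 0) = (r : ℤ) ∧
  ∀ i, 0 < i → i < f.natDegree → f.coeff i ≠ 0 →
    (r : ℚ) / (f.natDegree : ℚ) ≤ nuQ p (f.coeff i) / ((f.natDegree : ℚ) - (i : ℚ))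

/-!
Write `h = g ∘ f^n`, so that `g ∘ f^(n+1) = h ∘ f` and `C_k = ∑ⱼ h_j · [x^k] f^j`; by the
ultrametric inequality it suffices to bound each term. Measure abscissae by `j / d^n`: the Newton
polygon of `h` then has vertices `(m_s, r_s)`, and being convex it is the maximum of the lines
extending its edges, so `ν_p(h_j) ≥ r_s + λ_{s+1} (m_s - j / d^n)` for every `s`. Every coefficient
of `f` lies above the line of slope `λ` through `(d, 0)`, hence `ν_p([x^k] f^j) ≥ λ (d j - k)`,
where `k ≤ d j`. Finally `r_t ≤ λ₁ (d + e - 1)` forces every edge slope `λ_{s+1}` to be at most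
`d λ₁ ≤ d^(n+1) λ`, and this is exactly what pays for moving along the line of the `(s+1)`-st edge
from `j / d^n` back to `k / d^(n+1)`.
-/

section Valuation

variable {p : ℕ} [Fact p.Prime]

lemma nuQ_mul {a b : ℚ} (ha : a ≠ 0) (hb : b ≠ 0) :
    nuQ p (a * b) = nuQ p a + nuQ p b := by
  simp [nuQ, padicValRat.mul ha hb]

lemma le_nuQ_sum {ι : Type*} (S : Finset ι) (F : ι → ℚ) {c : ℚ}
    (hF : ∀ i ∈ S, F i ≠ 0 → c ≤ nuQ p (F i)) (hS : ∑ i ∈ S, F i ≠ 0) :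
    c ≤ nuQ p (∑ i ∈ S, F i) := by
  induction S using Finset.cons_induction with
  | empty => simp at hS
  | cons a S ha ih =>
    rw [Finset.sum_cons] at hS ⊢
    have ih' := ih fun i hi => hF i (Finset.mem_cons_of_mem hi)
    by_cases hFa : F a = 0
    · rw [hFa, zero_add] at hS ⊢
      exact ih' hS
    by_cases hrest : ∑ i ∈ S, F i = 0
    · rw [hrest, add_zero] at hS ⊢
      exact hF a (Finset.mem_cons_self a S) hFa
    calc c ≤ min (nuQ p (F a)) (nuQ p (∑ i ∈ S, F i)) :=
          le_min (hF a (Finset.mem_cons_self a S) hFa) (ih' hrest)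
      _ ≤ nuQ p (F a + ∑ i ∈ S, F i) := by
          unfold nuQ
          exact_mod_cast padicValRat.min_le_padicValRat_add hS

lemma le_nuQ_coeff_mul {f g : ℚ[X]} {lam a b : ℚ}
    (hf : ∀ i, f.coeff i ≠ 0 → lam * (a - i) ≤ nuQ p (f.coeff i))
    (hg : ∀ i, g.coeff i ≠ 0 → lam * (b - i) ≤ nuQ p (g.coeff i))
    (k : ℕ) (hk : (f * g).coeff k ≠ 0) :
    lam * (a + b - k) ≤ nuQ p ((f * g).coeff k) := by
  rw [coeff_mul] at hk ⊢
  refine le_nuQ_sum _ _ (fun x hx hfg => ?_) hk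
  have hsum : (x.1 : ℚ) + x.2 = k := by exact_mod_cast Finset.HasAntidiagonal.mem_antidiagonal.mp hx
  rw [nuQ_mul (left_ne_zero_of_mul hfg) (right_ne_zero_of_mul hfg)]
  have := hf x.1 (left_ne_zero_of_mul hfg)
  have := hg x.2 (right_ne_zero_of_mul hfg)
  rw [← hsum]
  linarith

lemma le_nuQ_coeff_pow {f : ℚ[X]} {lam a : ℚ}
    (hf : ∀ i, f.coeff i ≠ 0 → lam * (a - i) ≤ nuQ p (f.coeff i)) (j : ℕ) :
    ∀ k, (f ^ j).coeff k ≠ 0 → lam * (j * a - k) ≤ nuQ p ((f ^ j).coeff k) := by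
  induction j with
  | zero =>
    intro k hk
    obtain rfl : k = 0 := by by_contra h; simp [coeff_one, h] at hk
    simp [nuQ]
  | succ j ih =>
    intro k hk
    rw [pow_succ] at hk ⊢
    convert le_nuQ_coeff_mul ih hf k hk using 2
    push_cast
    ring

lemma le_nuQ_coeff_comp {h f : ℚ[X]} {d : ℕ} (hd : 0 < d) (hfd : f.natDegree ≤ d)
    {lam a μ B c : ℚ} (hc : 0 < c)
    (hh : ∀ j, h.coeff j ≠ 0 → a + μ * (B - j / c) ≤ nuQ p (h.coeff j))
    (hf : ∀ i, f.coeff i ≠ 0 → lam * (d - i) ≤ nuQ p (f.coeff i))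
    (hμ : μ ≤ lam * (c * d)) (k : ℕ) (hk : (h.comp f).coeff k ≠ 0) :
    a + μ * (B - k / (c * d)) ≤ nuQ p ((h.comp f).coeff k) := by
  simp only [comp_eq_sum_left, Polynomial.sum_def, finsetSum_coeff, coeff_C_mul] at hk ⊢
  refine le_nuQ_sum _ _ (fun j _ hterm => ?_) hk
  have hhj := left_ne_zero_of_mul hterm
  have hfj := right_ne_zero_of_mul hterm
  have hkj : (k : ℚ) ≤ j * d := by
    have := (le_natDegree_of_ne_zero hfj).trans (natDegree_pow_le_of_le j hfd)
    exact_mod_cast this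
  have hcd : 0 < c * d := mul_pos hc (by exact_mod_cast hd)
  have hshift : μ * (j / c - k / (c * d)) ≤ lam * (j * d - k) := by
    have : μ * (j / c - k / (c * d)) = μ / (c * d) * (j * d - k) := by
      field_simp
    rw [this]
    exact mul_le_mul_of_nonneg_right ((div_le_iff₀ hcd).2 hμ) (by linarith)
  rw [nuQ_mul hhj hfj]
  linarith [hh j hhj, le_nuQ_coeff_pow hf j k hfj]

end Valuation

lemma le_nuQ_coeff_of_mem_lowerBounds {p d : ℕ} {f : ℚ[X]} {lam : ℚ} (hfd : f.natDegree = d)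
    (had : padicValRat p (f.coeff d) = 0)
    (hlam : lam ∈ lowerBounds {q : ℚ | ∃ i, i < d ∧ f.coeff i ≠ 0 ∧
      q = nuQ p (f.coeff i) / ((d : ℚ) - (i : ℚ))})
    (i : ℕ) (hi : f.coeff i ≠ 0) : lam * (d - i) ≤ nuQ p (f.coeff i) := by
  rcases lt_trichotomy i d with hid | rfl | hid
  · have hpos : (0 : ℚ) < d - i := sub_pos.2 (by exact_mod_cast hid)
    exact (le_div_iff₀ hpos).1 (hlam ⟨i, hid, hi, rfl⟩)
  · simp [nuQ, had]
  · exact absurd (coeff_eq_zero_of_natDegree_lt (hfd ▸ hid)) hi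

lemma exists_apply_succ_le_and_le_apply {β : Type*} [LinearOrder β] (N : ℕ → β) {j : β} :
    ∀ {t : ℕ}, 0 < t → N t ≤ j → j ≤ N 0 → ∃ u < t, N (u + 1) ≤ j ∧ j ≤ N u
  | 0, ht, _, _ => absurd ht (lt_irrefl 0)
  | t + 1, _, hjt, hj0 => by
    rcases Nat.eq_zero_or_pos t with rfl | ht
    · exact ⟨0, Nat.zero_lt_one, hjt, hj0⟩
    rcases le_or_gt (N t) j with hle | hlt
    · obtain ⟨u, hu, h⟩ := exists_apply_succ_le_and_le_apply N ht hle hj0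
      exact ⟨u, hu.trans (Nat.lt_succ_self t), h⟩
    · exact ⟨t, Nat.lt_succ_self t, hjt, hlt.le⟩

lemma StrictAntiOn.apply_succ_lt {β : Type*} [Preorder β] {f : ℕ → β} {t u : ℕ}
    (hf : StrictAntiOn f (Set.Iic t)) (hu : u < t) : f (u + 1) < f u :=
  hf (Set.mem_Iic.2 hu.le) (Set.mem_Iic.2 hu) u.lt_succ_self

lemma StrictAntiOn.apply_le_apply_zero {β : Type*} [Preorder β] {f : ℕ → β} {t w : ℕ}
    (hf : StrictAntiOn f (Set.Iic t)) (hw : w ≤ t) : f w ≤ f 0 :=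
  hf.antitoneOn (Set.mem_Iic.2 (Nat.zero_le t)) (Set.mem_Iic.2 hw) (Nat.zero_le w)

section PiecewiseLinear

variable (M R : ℕ → ℚ)

-- The vertices are `(M s, R s)` with `M` decreasing, so `npSlope M R s` is the paper's `λ_{s+1}`.
def npSlope (s : ℕ) : ℚ := (R (s + 1) - R s) / (M s - M (s + 1))

def npLine (s : ℕ) (x : ℚ) : ℚ := R s + npSlope M R s * (M s - x)

variable {M R}

lemma npLine_eq_of_ne {s : ℕ} (hs : M (s + 1) ≠ M s) (x : ℚ) :
    R (s + 1) + npSlope M R s * (M (s + 1) - x) = npLine M R s x := by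
  have : M s - M (s + 1) ≠ 0 := sub_ne_zero.2 hs.symm
  unfold npLine npSlope
  field_simp
  ring

lemma npLine_succ_sub {s : ℕ} (hs : M (s + 1) ≠ M s) (x : ℚ) :
    npLine M R (s + 1) x - npLine M R s x =
      (npSlope M R (s + 1) - npSlope M R s) * (M (s + 1) - x) := by
  rw [← npLine_eq_of_ne hs, npLine]
  ring

variable {t : ℕ}

lemma npLine_le_npLine_of_le (hM : StrictAntiOn M (Set.Iic t))
    (hconv : ∀ v, v + 1 < t → npSlope M R v ≤ npSlope M R (v + 1))
    {s u : ℕ} (hsu : s ≤ u) (hu : u < t) {x : ℚ} (hx : x ≤ M u) :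
    npLine M R s x ≤ npLine M R u x := by
  induction u, hsu using Nat.le_induction with
  | base => exact le_rfl
  | succ u _ ih =>
    have hMu := hM.apply_succ_lt (Nat.lt_of_succ_lt hu)
    have := npLine_succ_sub (R := R) hMu.ne x
    have := mul_nonneg (sub_nonneg.2 (hconv u hu)) (sub_nonneg.2 hx)
    linarith [ih (by omega) (hx.trans hMu.le)]

lemma npLine_le_npLine_of_ge (hM : StrictAntiOn M (Set.Iic t))
    (hconv : ∀ v, v + 1 < t → npSlope M R v ≤ npSlope M R (v + 1))
    {s u : ℕ} (hus : u ≤ s) (hs : s < t) {x : ℚ} (hx : M (u + 1) ≤ x) :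
    npLine M R s x ≤ npLine M R u x := by
  induction s, hus using Nat.le_induction with
  | base => exact le_rfl
  | succ s hus ih =>
    have hMs := hM.apply_succ_lt (Nat.lt_of_succ_lt hs)
    have hxs : M (s + 1) ≤ x :=
      (hM.antitoneOn (Set.mem_Iic.2 (by omega)) (Set.mem_Iic.2 hs.le) (by omega)).trans hx
    have := npLine_succ_sub (R := R) hMs.ne x
    have := mul_nonneg (sub_nonneg.2 (hconv s hs)) (sub_nonneg.2 hxs)
    linarith [ih (by omega)]

lemma npLine_le_npLine_of_mem_Icc (hM : StrictAntiOn M (Set.Iic t))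
    (hconv : ∀ v, v + 1 < t → npSlope M R v ≤ npSlope M R (v + 1))
    {s u : ℕ} (hs : s < t) (hu : u < t) {x : ℚ} (hx : x ∈ Set.Icc (M (u + 1)) (M u)) :
    npLine M R s x ≤ npLine M R u x := by
  rcases le_total s u with hsu | hus
  · exact npLine_le_npLine_of_le hM hconv hsu hu hx.2
  · exact npLine_le_npLine_of_ge hM hconv hus hs hx.1

lemma npLine_le_vertex (hM : StrictAntiOn M (Set.Iic t))
    (hconv : ∀ v, v + 1 < t → npSlope M R v ≤ npSlope M R (v + 1))
    {s v : ℕ} (hs : s < t) (hv : v ≤ t) : npLine M R s (M v) ≤ R v := by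
  rcases v with _ | v
  · calc npLine M R s (M 0) ≤ npLine M R 0 (M 0) :=
          npLine_le_npLine_of_mem_Icc hM hconv hs (by omega)
            ⟨(hM.apply_succ_lt (by omega)).le, le_rfl⟩
      _ = R 0 := by simp [npLine]
  · calc npLine M R s (M (v + 1)) ≤ npLine M R v (M (v + 1)) :=
          npLine_le_npLine_of_mem_Icc hM hconv hs hv ⟨le_rfl, (hM.apply_succ_lt hv).le⟩
      _ = R (v + 1) := by rw [← npLine_eq_of_ne (hM.apply_succ_lt hv).ne]; simp

lemma npSlope_le_npSlope_zero_mul (hM : StrictAntiOn M (Set.Iic t))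
    (hconv : ∀ v, v + 1 < t → npSlope M R v ≤ npSlope M R (v + 1))
    (hR0 : R 0 = 0) (hMt : M t = 0) (hσ0 : 0 ≤ npSlope M R 0) {δ : ℚ} (hδ : 1 ≤ δ)
    (hRt : R t ≤ npSlope M R 0 * (δ + M 0 - 1)) {s : ℕ} (hs : s < t) (hMs : 1 ≤ M s) :
    npSlope M R s ≤ npSlope M R 0 * δ := by
  have hright : R s + npSlope M R s * M s ≤ R t := by
    simpa [npLine, hMt] using npLine_le_vertex hM hconv hs le_rfl
  have hleft : npSlope M R 0 * (M 0 - M s) ≤ R s := by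
    simpa [npLine, hR0] using npLine_le_vertex hM hconv (s := 0) (by omega) hs.le
  have hconvex : npSlope M R 0 * (δ - 1 + M s) ≤ npSlope M R 0 * δ * M s := by
    nlinarith [mul_nonneg hσ0 (mul_nonneg (sub_nonneg.2 hδ) (sub_nonneg.2 hMs))]
  refine le_of_mul_le_mul_right ?_ (zero_lt_one.trans_le hMs)
  linarith

end PiecewiseLinear

namespace HasNPVertices

variable {p : ℕ} {h : ℚ[X]} {t c e : ℕ} {m : ℕ → ℕ} {ys : ℕ → ℚ}

lemma npSlope_le_npSlope_succ (hNP : HasNPVertices p h t (fun s => c * (e - m s)) ys)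
    (hc : 0 < c) (hm0 : m 0 = e) (hm : StrictAntiOn m (Set.Iic t)) (v : ℕ) (hv : v + 1 < t) :
    npSlope (fun v => (m v : ℚ)) ys v ≤ npSlope (fun v => (m v : ℚ)) ys (v + 1) := by
  have hme : ∀ w ≤ t, m w ≤ e := fun w hw => hm0 ▸ hm.apply_le_apply_zero hw
  obtain ⟨-, -, -, -, -, hslopes, -⟩ := hNP
  have hslope := hslopes (v + 1) (by omega) hv
  simp only [Nat.add_sub_cancel] at hslope
  push_cast [Nat.cast_sub (hme v (by omega)), Nat.cast_sub (hme (v + 1) (by omega)),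
    Nat.cast_sub (hme (v + 2) (by omega))] at hslope
  have hcq : (0 : ℚ) < c := by exact_mod_cast hc
  have hscale : ∀ w : ℕ, (ys (w + 1) - ys w) / (c * (e - m (w + 1)) - c * (e - m w)) =
      npSlope (fun v => (m v : ℚ)) ys w / c := fun w => by
    rw [npSlope, div_div, mul_comm]
    ring_nf
  rw [hscale, hscale] at hslope
  exact ((div_lt_div_iff_of_pos_right hcq).1 hslope).le

lemma npLine_le_nuQ_coeff (hNP : HasNPVertices p h t (fun s => c * (e - m s)) ys)
    (hc : 0 < c) (hm0 : m 0 = e) (hmt : m t = 0) (hm : StrictAntiOn m (Set.Iic t))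
    {s : ℕ} (hs : s < t) {j : ℕ} (hj : h.coeff j ≠ 0) :
    npLine (fun v => (m v : ℚ)) ys s (j / c) ≤ nuQ p (h.coeff j) := by
  have hme : ∀ w ≤ t, m w ≤ e := fun w hw => hm0 ▸ hm.apply_le_apply_zero hw
  have hM : StrictAntiOn (fun v => (m v : ℚ)) (Set.Iic t) :=
    Nat.strictMono_cast.comp_strictAntiOn hm
  obtain ⟨-, -, hlast, -, -, -, hbelow⟩ := id hNP
  have hdeg : h.natDegree = c * e := by simpa [hmt] using hlast.symm
  have hjD : j ≤ c * e := hdeg ▸ le_natDegree_of_ne_zero hj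
  obtain ⟨u, hu, hju1, hju⟩ := exists_apply_succ_le_and_le_apply (fun v => c * m v) (t := t)
    (j := j) (by omega) (by simp [hmt]) (by simpa [hm0] using hjD)
  have hbound := hbelow (u + 1) (by omega) (by omega) j hj
    (by
      rw [Nat.add_sub_cancel, hdeg]; beta_reduce
      rw [Nat.mul_sub]; exact Nat.sub_le_sub_left hju _)
    (by rw [hdeg]; beta_reduce; rw [Nat.mul_sub]; exact Nat.sub_le_sub_left hju1 _)
  simp only [Nat.add_sub_cancel, hdeg] at hbound
  push_cast [Nat.cast_sub (hme u hu.le), Nat.cast_sub (hme (u + 1) hu), Nat.cast_sub hjD] at hbound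
  have hden : (c : ℚ) * (e - m (u + 1)) - c * (e - m u) = c * (m u - m (u + 1)) := by ring
  have hnum : (c : ℚ) * e - j - c * (e - m u) = c * m u - j := by ring
  rw [hden, hnum] at hbound
  have hcq : (0 : ℚ) < c := by exact_mod_cast hc
  have hline : npLine (fun v => (m v : ℚ)) ys u (j / c) =
      ys u + (ys (u + 1) - ys u) / (c * (m u - m (u + 1))) * (c * m u - j) := by
    simp only [npLine, npSlope]
    field_simp
  rw [← hline] at hbound
  calc npLine (fun v => (m v : ℚ)) ys s (j / c) ≤ npLine (fun v => (m v : ℚ)) ys u (j / c) := by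
        refine npLine_le_npLine_of_mem_Icc hM (hNP.npSlope_le_npSlope_succ hc hm0 hm) hs hu ⟨?_, ?_⟩
        · rw [le_div_iff₀ hcq, mul_comm]; exact_mod_cast hju1
        · rw [div_le_iff₀ hcq, mul_comm]; exact_mod_cast hju
    _ ≤ nuQ p (h.coeff j) := hbound

end HasNPVertices

lemma nuQ_coeff_div_sub_nonneg {p e : ℕ} {g : ℚ[X]}
    (hbi : ∀ i, i < e → g.coeff i ≠ 0 → 1 ≤ padicValRat p (g.coeff i)) {i : ℕ} (hi : i < e) :
    0 ≤ nuQ p (g.coeff i) / ((e : ℚ) - i) := by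
  refine div_nonneg ?_ (sub_nonneg.2 (by exact_mod_cast hi.le))
  by_cases hz : g.coeff i = 0
  · simp [nuQ, hz]
  · unfold nuQ
    exact_mod_cast zero_le_one.trans (hbi i hi hz)

lemma npSlope_le_mul_of_nuQ_coeff_zero_le {p e t : ℕ} {g : ℚ[X]} {m : ℕ → ℕ} {lam1 d : ℚ}
    (hbe : padicValRat p (g.coeff e) = 0) (hm0 : m 0 = e) (hmt : m t = 0)
    (hm : StrictAntiOn m (Set.Iic t))
    (hconv : ∀ v, v + 1 < t → npSlope (fun v => (m v : ℚ)) (fun v => nuQ p (g.coeff (m v))) v ≤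
      npSlope (fun v => (m v : ℚ)) (fun v => nuQ p (g.coeff (m v))) (v + 1))
    (hlam1 : lam1 = nuQ p (g.coeff (m 1)) / ((e : ℚ) - (m 1 : ℚ))) (hlam1_nonneg : 0 ≤ lam1)
    (hd : 1 ≤ d) (hg0 : nuQ p (g.coeff 0) ≤ lam1 * (d + e - 1)) {s : ℕ} (hs : s < t) :
    npSlope (fun v => (m v : ℚ)) (fun v => nuQ p (g.coeff (m v))) s ≤ lam1 * d := by
  have hR0 : nuQ p (g.coeff (m 0)) = 0 := by simp [hm0, nuQ, hbe]
  have hσ0 : npSlope (fun v => (m v : ℚ)) (fun v => nuQ p (g.coeff (m v))) 0 = lam1 := by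
    simp [npSlope, hm0, nuQ, hbe, hlam1]
  have hms : 1 ≤ m s := by
    have := hm (Set.mem_Iic.2 hs.le) (Set.mem_Iic.2 le_rfl) hs
    omega
  have hM : StrictAntiOn (fun v => (m v : ℚ)) (Set.Iic t) :=
    Nat.strictMono_cast.comp_strictAntiOn hm
  rw [← hσ0]
  refine npSlope_le_npSlope_zero_mul hM hconv hR0 (by simp [hmt]) (hσ0 ▸ hlam1_nonneg) hd ?_ hs
    (by exact_mod_cast hms)
  simpa [hσ0, hmt, hm0] using hg0

lemma polyIter_succ_eq_comp (f : ℚ[X]) (n : ℕ) : polyIter f (n + 1) = (polyIter f n).comp f := by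
  induction n with
  | zero => simp [polyIter]
  | succ n ih =>
    show f.comp (polyIter f (n + 1)) = (f.comp (polyIter f n)).comp f
    rw [ih, comp_assoc]

theorem valuation_lower_bound_of_next_iterate_general
    (p : ℕ) (hp : p.Prime)
    (g f : Polynomial ℚ) (e d t : ℕ) (m : ℕ → ℕ)
    (hbe : padicValRat p (g.coeff e) = 0)
    (hbi : ∀ i, i < e → g.coeff i ≠ 0 → 1 ≤ padicValRat p (g.coeff i))
    (hm0 : m 0 = e) (hmt : m t = 0)
    (hmdec : ∀ s, s < t → m (s + 1) < m s)
    (hfd : f.natDegree = d) (hd1 : 1 ≤ d)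
    (had : padicValRat p (f.coeff d) = 0)
    (lam : ℚ)
    (hlam : IsLeast {q : ℚ | ∃ i, i < d ∧ f.coeff i ≠ 0 ∧
      q = nuQ p (f.coeff i) / ((d : ℚ) - (i : ℚ))} lam)
    (lam1 : ℚ)
    (hlam1 : lam1 = nuQ p (g.coeff (m 1)) / ((e : ℚ) - (m 1 : ℚ)))
    (hlamge : lam1 ≤ lam)
    (hcase :
      nuQ p (g.coeff 0) < lam1 * ((d : ℚ) + (e : ℚ) - 1) ∨
      (nuQ p (g.coeff 0) = lam1 * ((d : ℚ) + (e : ℚ) - 1) ∧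
        (f.eval 0 = 0 ∨ (d : ℚ) * lam < nuQ p (f.eval 0) ∨ lam1 < lam)))
    (n : ℕ)
    (hNPn : HasNPVertices p (g.comp (polyIter f n)) t
      (fun s => d ^ n * (e - m s)) (fun s => nuQ p (g.coeff (m s)))) :
    ∀ s, s < t → ∀ k : ℕ, k ≤ d ^ (n + 1) * m s →
      (g.comp (polyIter f (n + 1))).coeff k ≠ 0 →
      nuQ p (g.coeff (m (s + 1))) +
          ((nuQ p (g.coeff (m (s + 1))) - nuQ p (g.coeff (m s))) /
            ((m s : ℚ) - (m (s + 1) : ℚ))) *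
            ((m (s + 1) : ℚ) - (k : ℚ) / (d : ℚ) ^ (n + 1)) ≤
        nuQ p ((g.comp (polyIter f (n + 1))).coeff k) := by
  intro s hs k _ hCk
  have : Fact p.Prime := ⟨hp⟩
  have hm : StrictAntiOn m (Set.Iic t) := strictAntiOn_Iic_of_succ_lt hmdec
  have hdn : 0 < d ^ n := pow_pos hd1 n
  have hconv := hNPn.npSlope_le_npSlope_succ hdn hm0 hm
  set M : ℕ → ℚ := fun v => (m v : ℚ)
  set R : ℕ → ℚ := fun v => nuQ p (g.coeff (m v))
  have hlam1_nonneg : 0 ≤ lam1 := hlam1 ▸ nuQ_coeff_div_sub_nonneg hbi (hm0 ▸ hmdec 0 (by omega))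
  have hg0 : nuQ p (g.coeff 0) ≤ lam1 * (d + e - 1) := by rcases hcase with h | ⟨h, -⟩ <;> linarith
  have hslope : npSlope M R s ≤ lam * ((d : ℚ) ^ n * d) :=
    calc _ ≤ lam1 * d := npSlope_le_mul_of_nuQ_coeff_zero_le hbe hm0 hmt hm hconv hlam1
          hlam1_nonneg (by exact_mod_cast hd1) hg0 hs
      _ ≤ lam * d := mul_le_mul_of_nonneg_right hlamge (Nat.cast_nonneg d)
      _ ≤ lam * ((d : ℚ) ^ n * d) := mul_le_mul_of_nonneg_left
          (le_mul_of_one_le_left (Nat.cast_nonneg d) (one_le_pow₀ (by exact_mod_cast hd1)))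
          (hlam1_nonneg.trans hlamge)
  have hbelow : ∀ j, (g.comp (polyIter f n)).coeff j ≠ 0 →
      npLine M R s (j / (d : ℚ) ^ n) ≤ nuQ p ((g.comp (polyIter f n)).coeff j) := fun j hj => by
    simpa using hNPn.npLine_le_nuQ_coeff hdn hm0 hmt hm hs hj
  calc _ = npLine M R s (k / ((d : ℚ) ^ n * d)) := by
        rw [pow_succ]
        exact npLine_eq_of_ne (M := M) (R := R) (by simpa [M] using (hmdec s hs).ne) _
    _ ≤ _ := by
        rw [polyIter_succ_eq_comp, ← comp_assoc] at hCk ⊢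
        exact le_nuQ_coeff_comp hd1 hfd.le (by positivity) hbelow
          (le_nuQ_coeff_of_mem_lowerBounds hfd had hlam.2) hslope k hCk

/-- Lemma 2.4. -/
theorem valuation_lower_bound_of_next_iterate
    (p : ℕ) (hp : p.Prime)
    (g f : Polynomial ℚ) (e d t : ℕ) (m : ℕ → ℕ)
    (hge : g.natDegree = e) (he1 : 1 ≤ e)
    (hb0 : g.coeff 0 ≠ 0)
    (hbe : padicValRat p (g.coeff e) = 0)
    (hbi : ∀ i, i < e → g.coeff i ≠ 0 → 1 ≤ padicValRat p (g.coeff i))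
    (hm0 : m 0 = e) (hmt : m t = 0)
    (hmdec : ∀ s, s < t → m (s + 1) < m s)
    (hNPg : HasNPVertices p g t (fun s => e - m s) (fun s => nuQ p (g.coeff (m s))))
    (hfd : f.natDegree = d) (hd1 : 1 ≤ d)
    (had : padicValRat p (f.coeff d) = 0)
    (lam : ℚ)
    (hlam : IsLeast {q : ℚ | ∃ i, i < d ∧ f.coeff i ≠ 0 ∧
      q = nuQ p (f.coeff i) / ((d : ℚ) - (i : ℚ))} lam)
    (lam1 : ℚ)
    (hlam1 : lam1 = nuQ p (g.coeff (m 1)) / ((e : ℚ) - (m 1 : ℚ)))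
    (hlamge : lam1 ≤ lam)
    (hcase :
      nuQ p (g.coeff 0) < lam1 * ((d : ℚ) + (e : ℚ) - 1) ∨
      (nuQ p (g.coeff 0) = lam1 * ((d : ℚ) + (e : ℚ) - 1) ∧
        (f.eval 0 = 0 ∨ (d : ℚ) * lam < nuQ p (f.eval 0) ∨ lam1 < lam)))
    (n : ℕ)
    (hNPn : HasNPVertices p (g.comp (polyIter f n)) t
      (fun s => d ^ n * (e - m s)) (fun s => nuQ p (g.coeff (m s)))) :
    ∀ s, s < t → ∀ k : ℕ, k ≤ d ^ (n + 1) * m s →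
      (g.comp (polyIter f (n + 1))).coeff k ≠ 0 →
      nuQ p (g.coeff (m (s + 1))) +
          ((nuQ p (g.coeff (m (s + 1))) - nuQ p (g.coeff (m s))) /
            ((m s : ℚ) - (m (s + 1) : ℚ))) *
            ((m (s + 1) : ℚ) - (k : ℚ) / (d : ℚ) ^ (n + 1)) ≤
        nuQ p ((g.comp (polyIter f (n + 1))).coeff k) :=
  valuation_lower_bound_of_next_iterate_general p hp g f e d t m hbe hbi hm0 hmt hmdec hfd hd1 had
    lam hlam lam1 hlam1 hlamge hcase n hNPn
end

section
/- Let p be a prime and let g(x) = b_e x^e + ⋯ + b_0 ∈ ℚ[x] have degree e ≥ 1 with b_0 ≠ 0, ν_p(b_e) = 0, and ν_p(b_i) ≥ 1 for every 0 ≤ i ≤ e−1 with b_i ≠ 0. Suppose NP_p(g) has successive vertices (0,0), (e−m_1, r_1), …, (e−m_{t−1}, r_{t−1}), (e, r_t), where e = m_0 > m_1 > ⋯ > m_t = 0 and r_i = ν_p(b_{m_i}), and set λ_1 = r_1/(e−m_1). If r_t ≤ λ_1(2e−1), then for every integer n ≥ 1 the number of irreducible factors of the n-th iterate g^n(x) over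 ℚ, counted with multiplicity, is at most r_t; in particular g is eventually stable over ℚ. -/
open Polynomial

/-!
Reduce modulo `p`. The hypotheses on `g` say that it has `p`-integral coefficients and reduces to a
nonzero monomial `u X^e`; composing such reductions, every iterate `g^n` reduces to some `v X^(e^n)`.
By Gauss's lemma over `ℤ_[p]`, a monic irreducible factor of `g^n` over `ℚ` has a monic lift to
`ℤ_[p]` dividing the lift of `g^n`, so its reduction divides `X^(e^n)` and its constant term has
valuation at least `1`. The monic factors multiply to `g^n` divided by its unit leading coefficient,
so their number is at most `ν_p(g^n(0))`. For `e ≥ 2` the ultrametric inequality gives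
`ν_p(g(a)) = ν_p(b_0)` whenever `ν_p(a) = ν_p(b_0) ≥ 1`, hence `ν_p(g^n(0)) = ν_p(b_0) = r_t` along
the critical orbit; for `e = 1` every iterate is linear.
-/

section

variable {p : ℕ} [hp : Fact p.Prime]

namespace PadicInt

theorem toZMod_eq_zero_iff_norm_lt_one (z : ℤ_[p]) : toZMod z = 0 ↔ ‖z‖ < 1 := by
  rw [← RingHom.mem_ker, ker_toZMod, IsLocalRing.mem_maximalIdeal, mem_nonunits]

theorem isUnit_iff_toZMod_ne_zero (z : ℤ_[p]) : IsUnit z ↔ toZMod z ≠ 0 := by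
  rw [ne_eq, toZMod_eq_zero_iff_norm_lt_one, not_lt, isUnit_iff]
  exact ⟨fun h => h.ge, fun h => le_antisymm (norm_le_one z) h⟩

end PadicInt

namespace Padic

theorem norm_ratCast_eq_zpow {x : ℚ} (hx : x ≠ 0) :
    ‖(x : ℚ_[p])‖ = (p : ℝ) ^ (-padicValRat p x) := by
  rw [norm_eq_zpow_neg_valuation (by exact_mod_cast hx), valuation_ratCast]

theorem norm_ratCast_lt_one_iff {x : ℚ} (hx : x ≠ 0) :
    ‖(x : ℚ_[p])‖ < 1 ↔ 0 < padicValRat p x := by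
  rw [norm_ratCast_eq_zpow hx, ← zpow_zero (p : ℝ),
    zpow_lt_zpow_iff_right₀ (by exact_mod_cast hp.out.one_lt), neg_lt_zero]

theorem norm_ratCast_eq_one_iff {x : ℚ} (hx : x ≠ 0) :
    ‖(x : ℚ_[p])‖ = 1 ↔ padicValRat p x = 0 := by
  rw [norm_ratCast_eq_zpow hx, ← zpow_zero (p : ℝ),
    zpow_right_inj₀ (by exact_mod_cast hp.out.pos) (by exact_mod_cast hp.out.one_lt.ne'),
    neg_eq_zero]

end Padic

namespace padicValRat

theorem lt_sum_of_forall_lt {ι : Type*} {r : ℤ} {s : Finset ι} {F : ι → ℚ}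
    (hF : ∀ i ∈ s, F i ≠ 0 → r < padicValRat p (F i)) (hs : ∑ i ∈ s, F i ≠ 0) :
    r < padicValRat p (∑ i ∈ s, F i) := by
  classical
  induction s using Finset.induction_on with
  | empty => simp at hs
  | insert a s ha ih =>
    rw [Finset.sum_insert ha] at hs ⊢
    have ih' : ∑ i ∈ s, F i ≠ 0 → r < padicValRat p (∑ i ∈ s, F i) :=
      ih fun i hi => hF i (Finset.mem_insert_of_mem hi)
    by_cases hFa : F a = 0
    · rw [hFa, zero_add] at hs ⊢
      exact ih' hs
    by_cases hsum : ∑ i ∈ s, F i = 0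
    · rw [hsum, add_zero]
      exact hF a (Finset.mem_insert_self a s) hFa
    exact lt_of_lt_of_le (lt_min (hF a (Finset.mem_insert_self a s) hFa) (ih' hsum))
      (min_le_padicValRat_add hs)

theorem card_le_multiset_prod {s : Multiset ℚ} (hs : ∀ x ∈ s, x ≠ 0 ∧ 1 ≤ padicValRat p x) :
    (s.card : ℤ) ≤ padicValRat p s.prod := by
  induction s using Multiset.induction_on with
  | empty => simp
  | cons a s ih =>
    obtain ⟨ha0, ha1⟩ := hs a (Multiset.mem_cons_self a s)
    have hs' : ∀ x ∈ s, x ≠ 0 ∧ 1 ≤ padicValRat p x := fun x hx =>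
      hs x (Multiset.mem_cons_of_mem hx)
    have hprod : s.prod ≠ 0 := Multiset.prod_ne_zero fun h0 => (hs' 0 h0).1 rfl
    rw [Multiset.card_cons, Multiset.prod_cons, padicValRat.mul ha0 hprod]
    push_cast
    linarith [ih hs']

end padicValRat

def ReducesToMonomial (G : ℤ_[p][X]) : Prop :=
  ∃ u : ZMod p, u ≠ 0 ∧ G.map PadicInt.toZMod = C u * X ^ G.natDegree

theorem reducesToMonomial_X : ReducesToMonomial (X : ℤ_[p][X]) :=
  ⟨1, one_ne_zero, by simp⟩

namespace ReducesToMonomial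

variable {G H : ℤ_[p][X]}

theorem of_norm_lt_one (hlc : IsUnit G.leadingCoeff) (h : ∀ i < G.natDegree, ‖G.coeff i‖ < 1) :
    ReducesToMonomial G := by
  refine ⟨PadicInt.toZMod G.leadingCoeff, (PadicInt.isUnit_iff_toZMod_ne_zero _).mp hlc, ?_⟩
  ext i
  rw [coeff_map, coeff_C_mul_X_pow]
  split_ifs with hi
  · rw [hi, leadingCoeff]
  · rcases Nat.lt_or_gt_of_ne hi with hi | hi
    · exact (PadicInt.toZMod_eq_zero_iff_norm_lt_one _).mpr (h i hi)
    · rw [coeff_eq_zero_of_natDegree_lt hi, map_zero]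

theorem comp (hG : ReducesToMonomial G) (hH : ReducesToMonomial H) :
    ReducesToMonomial (G.comp H) := by
  obtain ⟨u, hu, hGu⟩ := hG
  obtain ⟨v, hv, hHv⟩ := hH
  refine ⟨u * v ^ G.natDegree, mul_ne_zero hu (pow_ne_zero _ hv), ?_⟩
  rw [Polynomial.map_comp, hGu, hHv, natDegree_comp, mul_comp, C_comp, X_pow_comp, mul_pow,
    ← C_pow, ← pow_mul, C_mul, mul_assoc, mul_comm H.natDegree]

theorem isUnit_leadingCoeff (hG : ReducesToMonomial G) : IsUnit G.leadingCoeff := by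
  obtain ⟨u, hu, hGu⟩ := hG
  have hlead := congrArg (coeff · G.natDegree) hGu
  simp only [coeff_map, coeff_C_mul_X_pow, if_true] at hlead
  rwa [PadicInt.isUnit_iff_toZMod_ne_zero, leadingCoeff, hlead]

theorem norm_coeff_zero_lt_one_of_dvd (hG : ReducesToMonomial G) {f : ℤ_[p][X]} (hf : f.Monic)
    (hdeg : 0 < f.natDegree) (hfG : f ∣ G) : ‖f.coeff 0‖ < 1 := by
  obtain ⟨u, hu, hGu⟩ := hG
  have hred : f.map PadicInt.toZMod ∣ X ^ G.natDegree := by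
    have := Polynomial.map_dvd PadicInt.toZMod hfG
    rwa [hGu, (isUnit_C.mpr hu.isUnit).dvd_mul_left] at this
  obtain ⟨i, -, hi⟩ := (dvd_prime_pow prime_X _).mp hred
  have hX : f.map PadicInt.toZMod = X ^ i :=
    eq_of_monic_of_associated (hf.map _) (monic_X_pow i) hi
  have hi0 : i ≠ 0 := by
    have := congrArg natDegree hX
    rw [hf.natDegree_map, natDegree_X_pow] at this
    omega
  have h0 := congrArg (coeff · 0) hX
  simp only [coeff_map, coeff_X_pow, if_neg (Ne.symm hi0)] at h0
  exact (PadicInt.toZMod_eq_zero_iff_norm_lt_one _).mp h0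

theorem norm_coeff_zero_lt_one (hG : ReducesToMonomial G) {f : ℚ_[p][X]} (hf : f.Monic)
    (hdeg : 0 < f.natDegree) (hfG : f ∣ G.map (algebraMap ℤ_[p] ℚ_[p])) : ‖f.coeff 0‖ < 1 := by
  have hinj : Function.Injective (algebraMap ℤ_[p] ℚ_[p]) := IsFractionRing.injective _ _
  obtain ⟨w, hw⟩ := hG.isUnit_leadingCoeff.exists_right_inv
  have hGw : (G * C w).Monic := by rw [Monic, leadingCoeff_mul, leadingCoeff_C, hw]
  have hfGw : f ∣ (G * C w).map (algebraMap ℤ_[p] ℚ_[p]) :=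
    hfG.trans (by rw [Polynomial.map_mul]; exact dvd_mul_right _ _)
  obtain ⟨f', rfl⟩ : ∃ f' : ℤ_[p][X], f'.map (algebraMap ℤ_[p] ℚ_[p]) = f := by
    obtain ⟨f', hf'⟩ := IsIntegrallyClosed.eq_map_mul_C_of_dvd ℚ_[p] hGw hfGw
    rw [hf.leadingCoeff, C_1, mul_one] at hf'
    exact ⟨f', hf'⟩
  have hf' : f'.Monic := monic_of_injective hinj hf
  have hf'G : f' ∣ G :=
    ((isUnit_C.mpr (IsUnit.of_mul_eq_one_right _ hw)).dvd_mul_right).mp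
      (hGw.dvd_of_fraction_map_dvd_fraction_map hf' hfGw)
  rw [coeff_map]
  exact hG.norm_coeff_zero_lt_one_of_dvd hf'
    (by rwa [natDegree_map_eq_of_injective hinj] at hdeg) hf'G

end ReducesToMonomial

theorem exists_lift_reducesToMonomial {P : ℚ[X]} (hP : P ≠ 0)
    (hlc : padicValRat p P.leadingCoeff = 0)
    (hcoeff : ∀ i < P.natDegree, P.coeff i ≠ 0 → 1 ≤ padicValRat p (P.coeff i)) :
    ∃ G : ℤ_[p][X], G.map (algebraMap ℤ_[p] ℚ_[p]) = P.map (Rat.castHom ℚ_[p]) ∧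
      ReducesToMonomial G := by
  have hsmall : ∀ i < P.natDegree, ‖(P.coeff i : ℚ_[p])‖ < 1 := by
    intro i hi
    by_cases h0 : P.coeff i = 0
    · simp [h0]
    · exact (Padic.norm_ratCast_lt_one_iff h0).mpr (hcoeff i hi h0)
  have hlead : ‖(P.leadingCoeff : ℚ_[p])‖ = 1 :=
    (Padic.norm_ratCast_eq_one_iff (leadingCoeff_ne_zero.mpr hP)).mpr hlc
  have hint : ∀ i, ‖(P.coeff i : ℚ_[p])‖ ≤ 1 := by
    intro i
    rcases lt_trichotomy i P.natDegree with hi | rfl | hi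
    · exact (hsmall i hi).le
    · exact hlead.le
    · simp [coeff_eq_zero_of_natDegree_lt hi]
  obtain ⟨G, hG⟩ := (mem_lifts (P.map (Rat.castHom ℚ_[p]))).mp <|
    (lifts_iff_coeff_lifts (f := algebraMap ℤ_[p] ℚ_[p]) _).mpr fun i =>
      ⟨⟨_, hint i⟩, by rw [coeff_map]; rfl⟩
  have hdeg : G.natDegree = P.natDegree := by
    rw [← natDegree_map_eq_of_injective (IsFractionRing.injective ℤ_[p] ℚ_[p]), hG,
      natDegree_map_eq_of_injective (Rat.castHom ℚ_[p]).injective]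
  have hnorm : ∀ i, ‖G.coeff i‖ = ‖(P.coeff i : ℚ_[p])‖ := fun i => by
    rw [PadicInt.norm_def, ← PadicInt.algebraMap_apply, ← coeff_map, hG, coeff_map]; rfl
  refine ⟨G, hG, ReducesToMonomial.of_norm_lt_one ?_ fun i hi => ?_⟩
  · rw [PadicInt.isUnit_iff, leadingCoeff, hnorm, hdeg]
    exact hlead
  · rw [hnorm]
    exact hsmall i (hdeg ▸ hi)

section Lift

variable {P : ℚ[X]} {G : ℤ_[p][X]}
  (hGP : G.map (algebraMap ℤ_[p] ℚ_[p]) = P.map (Rat.castHom ℚ_[p])) (hG : ReducesToMonomial G)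
include hGP hG

theorem padicValRat_leadingCoeff_eq_zero_of_lift (hP : P ≠ 0) :
    padicValRat p P.leadingCoeff = 0 := by
  rw [← Padic.norm_ratCast_eq_one_iff (leadingCoeff_ne_zero.mpr hP),
    ← eq_ratCast (Rat.castHom ℚ_[p]),
    ← leadingCoeff_map_of_injective (Rat.castHom ℚ_[p]).injective, ← hGP,
    leadingCoeff_map_of_injective (IsFractionRing.injective ℤ_[p] ℚ_[p]),
    PadicInt.algebraMap_apply, ← PadicInt.norm_def, ← PadicInt.isUnit_iff]
  exact hG.isUnit_leadingCoeff

theorem one_le_padicValRat_coeff_zero_of_dvd_of_lift {q : ℚ[X]} (hq : q.Monic)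
    (hdeg : 0 < q.natDegree) (hqP : q ∣ P) (hq0 : q.coeff 0 ≠ 0) :
    1 ≤ padicValRat p (q.coeff 0) := by
  have hdvd : q.map (Rat.castHom ℚ_[p]) ∣ G.map (algebraMap ℤ_[p] ℚ_[p]) := by
    rw [hGP]
    exact Polynomial.map_dvd _ hqP
  have hlt := hG.norm_coeff_zero_lt_one (hq.map _) (by rwa [natDegree_map]) hdvd
  rw [coeff_map] at hlt
  exact (Padic.norm_ratCast_lt_one_iff hq0).mp hlt

theorem numFactors_le_padicValRat_coeff_zero_of_lift (hP0 : P.coeff 0 ≠ 0) :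
    (numFactors P : ℤ) ≤ padicValRat p (P.coeff 0) := by
  have hP : P ≠ 0 := by rintro rfl; exact hP0 rfl
  have hlc0 : P.leadingCoeff ≠ 0 := leadingCoeff_ne_zero.mpr hP
  set F := UniqueFactorizationMonoid.normalizedFactors P
  have hirr : ∀ q ∈ F, Irreducible q := UniqueFactorizationMonoid.irreducible_of_normalized_factor
  have hmonic : ∀ q ∈ F, q.Monic := fun q hq => by
    rw [← UniqueFactorizationMonoid.normalize_normalized_factor q hq]
    exact monic_normalize (hirr q hq).ne_zero
  have hprod : F.prod = P * C P.leadingCoeff⁻¹ :=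
    eq_of_monic_of_associated (by simpa using monic_multiset_prod_of_monic F id hmonic)
      (monic_mul_leadingCoeff_inv hP)
      ((UniqueFactorizationMonoid.prod_normalizedFactors hP).trans
        (associated_mul_unit_right _ _ (isUnit_C.mpr (inv_ne_zero hlc0).isUnit)))
  have hfactor : ∀ x ∈ F.map (coeff · 0), x ≠ 0 ∧ 1 ≤ padicValRat p x := by
    simp only [Multiset.mem_map]
    rintro _ ⟨q, hq, rfl⟩
    have hqP : q ∣ P := UniqueFactorizationMonoid.dvd_of_mem_normalizedFactors hq
    have hq0 : q.coeff 0 ≠ 0 := fun h0 => hP0 <| by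
      obtain ⟨r, rfl⟩ := hqP
      rw [mul_coeff_zero, h0, zero_mul]
    exact ⟨hq0, one_le_padicValRat_coeff_zero_of_dvd_of_lift hGP hG (hmonic q hq)
      (hirr q hq).natDegree_pos hqP hq0⟩
  calc (numFactors P : ℤ) = (F.map (coeff · 0)).card := by
        simp only [Multiset.card_map, numFactors, F, UniqueFactorizationMonoid.normalizedFactors]
    _ ≤ padicValRat p (F.map (coeff · 0)).prod := padicValRat.card_le_multiset_prod hfactor
    _ = padicValRat p (P.coeff 0) := by
        rw [← coeff_zero_multiset_prod, hprod, coeff_mul_C,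
          padicValRat.mul hP0 (inv_ne_zero hlc0), padicValRat.inv,
          padicValRat_leadingCoeff_eq_zero_of_lift hGP hG hP, neg_zero, add_zero]

end Lift

theorem padicValRat_eval_eq_of_padicValRat_eq {g : ℚ[X]} (hdeg : 2 ≤ g.natDegree)
    (hlc : 0 ≤ padicValRat p g.leadingCoeff)
    (hcoeff : ∀ i < g.natDegree, g.coeff i ≠ 0 → 1 ≤ padicValRat p (g.coeff i))
    (hb0 : g.coeff 0 ≠ 0) {a : ℚ} (ha : a ≠ 0)
    (hva : padicValRat p a = padicValRat p (g.coeff 0)) :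
    g.eval a ≠ 0 ∧ padicValRat p (g.eval a) = padicValRat p (g.coeff 0) := by
  have hr : 1 ≤ padicValRat p a := hva ▸ hcoeff 0 (by omega) hb0
  set S := ∑ i ∈ Finset.range g.natDegree, g.coeff (i + 1) * a ^ (i + 1)
  have heval : g.eval a = S + g.coeff 0 := by
    rw [eval_eq_sum_range, Finset.sum_range_succ', pow_zero, mul_one]
  -- `ν(b_i a^i) > ν(a)` for `i ≥ 1`: by `ν(b_i) ≥ 1` if `i < deg g`, by `deg g ≥ 2` if `i = deg g`
  have hS : S ≠ 0 → padicValRat p a < padicValRat p S := by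
    refine padicValRat.lt_sum_of_forall_lt fun i hi hne => ?_
    have hi : i + 1 ≤ g.natDegree := Finset.mem_range.mp hi
    have hc : g.coeff (i + 1) ≠ 0 := left_ne_zero_of_mul hne
    rw [padicValRat.mul hc (pow_ne_zero _ ha), padicValRat.pow _]
    rcases hi.lt_or_eq with hi | hi
    · have := hcoeff (i + 1) hi hc
      push_cast
      nlinarith
    · rw [hi, ← leadingCoeff]
      have : (2 : ℤ) ≤ g.natDegree := by exact_mod_cast hdeg
      nlinarith
  by_cases hS0 : S = 0
  · rw [heval, hS0, zero_add]
    exact ⟨hb0, rfl⟩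
  have hlt : padicValRat p (g.coeff 0) < padicValRat p S := hva ▸ hS hS0
  have hne : g.coeff 0 + S ≠ 0 := fun h0 => by
    rw [eq_neg_of_add_eq_zero_right h0, padicValRat.neg] at hlt
    exact lt_irrefl _ hlt
  rw [heval, add_comm]
  exact ⟨hne, padicValRat.add_eq_of_lt hne hb0 hS0 hlt⟩

theorem natDegree_polyIter (g : ℚ[X]) (n : ℕ) : (polyIter g n).natDegree = g.natDegree ^ n := by
  induction n with
  | zero => simp [polyIter]
  | succ n ih => rw [polyIter, natDegree_comp, ih, pow_succ']

theorem numFactors_polyIter_of_natDegree_eq_one {g : ℚ[X]} (hg : g.natDegree = 1) (n : ℕ) :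
    numFactors (polyIter g n) = 1 := by
  have hdeg : (polyIter g n).natDegree = 1 := by rw [natDegree_polyIter, hg, one_pow]
  exact UniqueFactorizationMonoid.card_factors_of_irreducible
    (irreducible_of_degree_eq_one ((degree_eq_iff_natDegree_eq_of_pos one_pos).mpr hdeg))

theorem exists_lift_polyIter {g : ℚ[X]} {G : ℤ_[p][X]}
    (hGg : G.map (algebraMap ℤ_[p] ℚ_[p]) = g.map (Rat.castHom ℚ_[p])) (hG : ReducesToMonomial G)
    (n : ℕ) : ∃ Gn : ℤ_[p][X], Gn.map (algebraMap ℤ_[p] ℚ_[p]) =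
      (polyIter g n).map (Rat.castHom ℚ_[p]) ∧ ReducesToMonomial Gn := by
  induction n with
  | zero => exact ⟨X, by simp [polyIter], reducesToMonomial_X⟩
  | succ n ih =>
    obtain ⟨Gn, hGn, hGnred⟩ := ih
    exact ⟨G.comp Gn, by rw [polyIter, Polynomial.map_comp, Polynomial.map_comp, hGg, hGn],
      hG.comp hGnred⟩

theorem padicValRat_polyIter_eval_zero {g : ℚ[X]} (hdeg : 2 ≤ g.natDegree)
    (hlc : 0 ≤ padicValRat p g.leadingCoeff)
    (hcoeff : ∀ i < g.natDegree, g.coeff i ≠ 0 → 1 ≤ padicValRat p (g.coeff i))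
    (hb0 : g.coeff 0 ≠ 0) {n : ℕ} (hn : 1 ≤ n) :
    (polyIter g n).eval 0 ≠ 0 ∧
      padicValRat p ((polyIter g n).eval 0) = padicValRat p (g.coeff 0) := by
  induction n, hn using Nat.le_induction with
  | base => simpa [polyIter, coeff_zero_eq_eval_zero] using hb0
  | succ n _ ih =>
    rw [polyIter, eval_comp]
    exact padicValRat_eval_eq_of_padicValRat_eq hdeg hlc hcoeff hb0 ih.1 ih.2

end

theorem iterate_factors_le_rt_general
    (p : ℕ) (hp : p.Prime)
    (g : Polynomial ℚ) (e : ℕ)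
    (hge : g.natDegree = e) (he1 : 1 ≤ e)
    (hb0 : g.coeff 0 ≠ 0)
    (hbe : padicValRat p (g.coeff e) = 0)
    (hbi : ∀ i, i < e → g.coeff i ≠ 0 → 1 ≤ padicValRat p (g.coeff i)) :
    (∀ n : ℕ, 1 ≤ n →
      (numFactors (polyIter g n) : ℤ) ≤ padicValRat p (g.coeff 0)) ∧
    ∃ C : ℕ, ∀ n : ℕ, 1 ≤ n → numFactors (polyIter g n) ≤ C := by
  have : Fact p.Prime := ⟨hp⟩
  subst hge
  have hbound : ∀ n, 1 ≤ n → (numFactors (polyIter g n) : ℤ) ≤ padicValRat p (g.coeff 0) := by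
    intro n hn
    rcases he1.eq_or_lt with hdeg | hdeg
    · rw [numFactors_polyIter_of_natDegree_eq_one hdeg.symm n]
      exact_mod_cast hbi 0 (by omega) hb0
    have hg : g ≠ 0 := by rintro rfl; exact hb0 rfl
    obtain ⟨G, hGg, hG⟩ := exists_lift_reducesToMonomial (p := p) hg hbe hbi
    obtain ⟨Gn, hGn, hGnred⟩ := exists_lift_polyIter hGg hG n
    obtain ⟨hne, hval⟩ := padicValRat_polyIter_eval_zero hdeg hbe.ge hbi hb0 hn
    rw [← coeff_zero_eq_eval_zero] at hne hval
    exact hval ▸ numFactors_le_padicValRat_coeff_zero_of_lift hGn hGnred hne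
  exact ⟨hbound, (padicValRat p (g.coeff 0)).toNat, fun n hn => by have := hbound n hn; omega⟩

/-- Section 6.3: bound on the number of irreducible factors of iterates by
`r_t`, and eventual stability. -/
theorem iterate_factors_le_rt
    (p : ℕ) (hp : p.Prime)
    (g : Polynomial ℚ) (e t : ℕ) (m : ℕ → ℕ)
    (hge : g.natDegree = e) (he1 : 1 ≤ e)
    (hb0 : g.coeff 0 ≠ 0)
    (hbe : padicValRat p (g.coeff e) = 0)
    (hbi : ∀ i, i < e → g.coeff i ≠ 0 → 1 ≤ padicValRat p (g.coeff i))
    (hm0 : m 0 = e) (hmt : m t = 0)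
    (hmdec : ∀ s, s < t → m (s + 1) < m s)
    (hNPg : HasNPVertices p g t (fun s => e - m s) (fun s => nuQ p (g.coeff (m s))))
    (hbound : nuQ p (g.coeff 0) ≤
      nuQ p (g.coeff (m 1)) / ((e : ℚ) - (m 1 : ℚ)) * (2 * (e : ℚ) - 1)) :
    (∀ n : ℕ, 1 ≤ n →
      (numFactors (polyIter g n) : ℤ) ≤ padicValRat p (g.coeff 0)) ∧
    ∃ C : ℕ, ∀ n : ℕ, 1 ≤ n → numFactors (polyIter g n) ≤ C :=
  iterate_factors_le_rt_general p hp g e hge he1 hb0 hbe hbi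
end

section
/- Let n ≥ 3 be an integer, let a and b be positive rational numbers with ν_2(a) = ν_2(b) = 0, and let c be an odd positive integer. Consider g(x) = x^{3n} + 2a·x^{2n−2} + 4b·x^{n−2} + 8c ∈ ℚ[x]. Then g is eventually stable over ℚ; more precisely, for every integer k ≥ 1 the number of irreducible factors of the k-th iterate g^k(x) over ℚ, counted with multiplicity, is at most 3. Moreover 0 is not preperiodic under g: the sequence of values satisfies 8 ≤ g(0) < g²(0) < g³(0) < ⋯. -/
open Polynomial

/-!
For a weight `L`, the least value of `L · v_p(a_j) + j` over the nonzero coefficients `a_j` of a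
polynomial, together with the first and last indices where it is attained, is additive under
multiplication: this is one slope of the Newton polygon, and the additivity is Gauss's lemma.

Write `E = deg g^k`. In `g^{k+1} = (g^k)^{3n} + 2a (g^k)^{2n-2} + 4b (g^k)^{n-2} + 8c`, the
2-adic Newton polygon of `g^k` is steep enough that, at the weights `(n-2)E`, `nE`, `(n+2)E`,
each power of `g^k` only contributes its top vertex. So the Newton polygon of `g^{k+1}` has three
edges, of horizontal lengths `(n-2)E`, `nE`, `(n+2)E` and slopes `-1/((n-2)E)`, `-1/(nE)`,
`-1/((n+2)E)`. Such an edge has no lattice point in its interior, so it belongs to the Newton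
polygon of a single irreducible factor, while every factor owns at least one edge: there are at
most three factors. Finally `g(x) > x` for `x ≥ 0`, so the orbit of `0` increases strictly.
-/

namespace padicValRat

variable {p : ℕ} [Fact p.Prime] {ι : Type*} {s : Finset ι} {f : ι → ℚ}

theorem exists_le_sum (hs : ∑ i ∈ s, f i ≠ 0) :
    ∃ i ∈ s, f i ≠ 0 ∧ padicValRat p (f i) ≤ padicValRat p (∑ i ∈ s, f i) := by
  classical
  induction s using Finset.induction_on with
  | empty => simp at hs
  | insert a s ha ih =>
    rw [Finset.sum_insert ha] at hs ⊢
    by_cases hrest : ∑ i ∈ s, f i = 0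
    · exact ⟨a, by simp, by simpa [hrest] using hs, by simp [hrest]⟩
    by_cases hfa : f a = 0
    · obtain ⟨i, hi, hfi, hle⟩ := ih hrest
      exact ⟨i, by simp [hi], hfi, by simpa [hfa] using hle⟩
    rcases min_le_iff.mp (min_le_padicValRat_add (p := p) hs) with hle | hle
    · exact ⟨a, by simp, hfa, hle⟩
    · obtain ⟨i, hi, hfi, hle'⟩ := ih hrest
      exact ⟨i, by simp [hi], hfi, hle'.trans hle⟩

theorem sum_eq_of_forall_lt [DecidableEq ι] {i₀ : ι} (hi₀ : i₀ ∈ s) (hf : f i₀ ≠ 0)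
    (hlt : ∀ i ∈ s, i ≠ i₀ → f i ≠ 0 → padicValRat p (f i₀) < padicValRat p (f i)) :
    ∑ i ∈ s, f i ≠ 0 ∧ padicValRat p (∑ i ∈ s, f i) = padicValRat p (f i₀) := by
  rw [← Finset.add_sum_erase s f hi₀]
  by_cases hrest : ∑ i ∈ s.erase i₀, f i = 0
  · simpa [hrest] using hf
  obtain ⟨i, hi, hfi, hle⟩ := exists_le_sum (p := p) hrest
  have hval : padicValRat p (f i₀) < padicValRat p (∑ i ∈ s.erase i₀, f i) :=
    (hlt i (Finset.mem_of_mem_erase hi) (Finset.ne_of_mem_erase hi) hfi).trans_le hle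
  have hne : f i₀ + ∑ i ∈ s.erase i₀, f i ≠ 0 := fun h => by
    rw [add_eq_zero_iff_eq_neg'.mp h, padicValRat.neg] at hval
    exact hval.false
  exact ⟨hne, add_eq_of_lt hne hf hrest hval⟩

end padicValRat

theorem Multiset.card_le_card_filter_sum {α ι : Type*} [Fintype ι] (S : Multiset α)
    (q : ι → α → Prop) [∀ i, DecidablePred (q i)] (hcover : ∀ a ∈ S, ∃ i, q i a) :
    Multiset.card S ≤ ∑ i, Multiset.card (S.filter (q i)) := by
  induction S using Multiset.induction_on with
  | empty => simp
  | cons a S ih =>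
    obtain ⟨i₀, hi₀⟩ := hcover a (Multiset.mem_cons_self a S)
    have hone : 1 ≤ ∑ i, if q i a then 1 else 0 :=
      le_trans (by simp [hi₀]) (Finset.single_le_sum (f := fun i => if q i a then 1 else 0)
        (fun _ _ => Nat.zero_le _) (Finset.mem_univ i₀))
    have := ih fun b hb => hcover b (Multiset.mem_cons_of_mem hb)
    simp only [Multiset.filter_cons, Multiset.card_add, Finset.sum_add_distrib,
      Multiset.card_cons] at this ⊢
    simp only [apply_ite Multiset.card, Multiset.card_singleton, Multiset.card_zero]
    omega

theorem Multiset.card_filter_ne_zero_le_one {α : Type*} {S : Multiset α} {f : α → ℕ} {L : ℕ}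
    (hsum : (S.map f).sum = L) (hdvd : ∀ a ∈ S, L ∣ f a) :
    Multiset.card (S.filter (f · ≠ 0)) ≤ 1 := by
  set T := S.filter (f · ≠ 0)
  rcases T.empty_or_exists_mem with hT | ⟨a, ha⟩
  · simp [hT]
  have hmem : ∀ b ∈ T, b ∈ S ∧ f b ≠ 0 := fun b hb => Multiset.mem_filter.mp hb
  have hL : 0 < L := Nat.pos_of_ne_zero fun h0 => (hmem a ha).2 <| by
    simpa [h0] using hdvd a (hmem a ha).1
  have hge : Multiset.card T • L ≤ (T.map f).sum :=
    Multiset.card_map f T ▸ Multiset.card_nsmul_le_sum fun _ hc => by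
      obtain ⟨b, hb, rfl⟩ := Multiset.mem_map.mp hc
      exact Nat.le_of_dvd (Nat.pos_of_ne_zero (hmem b hb).2) (hdvd b (hmem b hb).1)
  have hle : (T.map f).sum ≤ L := by
    rw [← hsum, ← Multiset.filter_add_not (f · ≠ 0) S, Multiset.map_add, Multiset.sum_add]
    exact Nat.le_add_right _ _
  rw [smul_eq_mul] at hge
  nlinarith

theorem Multiset.card_le_of_sum_eq_of_dvd {α ι : Type*} [Fintype ι] {S : Multiset α}
    (f : ι → α → ℕ) (L : ι → ℕ) (hsum : ∀ i, (S.map (f i)).sum = L i)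
    (hdvd : ∀ i, ∀ a ∈ S, L i ∣ f i a) (hcover : ∀ a ∈ S, ∃ i, f i a ≠ 0) :
    Multiset.card S ≤ Fintype.card ι := by
  classical
  calc Multiset.card S ≤ ∑ i, Multiset.card (S.filter (f i · ≠ 0)) :=
        S.card_le_card_filter_sum _ hcover
    _ ≤ ∑ _i : ι, 1 := Finset.sum_le_sum fun i _ =>
        Multiset.card_filter_ne_zero_le_one (hsum i) (hdvd i)
    _ = Fintype.card ι := by simp

theorem Multiset.forall_eq_of_forall_le_of_sum_eq {α : Type*} {S : Multiset α} {f g : α → ℕ}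
    (hle : ∀ a ∈ S, f a ≤ g a) (hsum : (S.map f).sum = (S.map g).sum) : ∀ a ∈ S, f a = g a := by
  by_contra! h
  obtain ⟨a, ha, hne⟩ := h
  exact (Multiset.sum_lt_sum hle ⟨a, ha, (hle a ha).lt_of_ne hne⟩).ne hsum

section NewtonPolygon

variable {p L : ℕ} {P Q : ℚ[X]} {m m' : ℤ} {x y x' y' j : ℕ}

def wval (p L : ℕ) (P : ℚ[X]) (j : ℕ) : ℤ := L * padicValRat p (P.coeff j) + j

/-- `m` is the least value of `wval p L P` on the support of `P`, attained first at `x` and last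
at `y`: the supporting line of slope `-1/L` of the Newton polygon of `P` touches it over
`[x, y]`. -/
structure NewtonFace (p L : ℕ) (P : ℚ[X]) (m : ℤ) (x y : ℕ) : Prop where
  le_wval : ∀ j, P.coeff j ≠ 0 → m ≤ wval p L P j
  coeff_left_ne_zero : P.coeff x ≠ 0
  wval_left : wval p L P x = m
  coeff_right_ne_zero : P.coeff y ≠ 0
  wval_right : wval p L P y = m
  lt_wval_of_lt_left : ∀ j < x, P.coeff j ≠ 0 → m < wval p L P j
  lt_wval_of_right_lt : ∀ j, y < j → P.coeff j ≠ 0 → m < wval p L P j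

namespace NewtonFace

theorem ne_zero (h : NewtonFace p L P m x y) : P ≠ 0 :=
  fun h0 => h.coeff_left_ne_zero (by simp [h0])

theorem left_le_right (h : NewtonFace p L P m x y) : x ≤ y := by
  by_contra! hyx
  exact (h.lt_wval_of_lt_left y hyx h.coeff_right_ne_zero).ne' h.wval_right

theorem right_le_natDegree (h : NewtonFace p L P m x y) : y ≤ P.natDegree :=
  le_natDegree_of_ne_zero h.coeff_right_ne_zero

theorem unique (h : NewtonFace p L P m x y) (h' : NewtonFace p L P m' x' y') :
    x = x' ∧ y = y' := by
  have hm : m = m' := le_antisymm (h'.wval_left ▸ h.le_wval x' h'.coeff_left_ne_zero)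
    (h.wval_left ▸ h'.le_wval x h.coeff_left_ne_zero)
  subst hm
  constructor
  · by_contra hne
    rcases Nat.lt_or_gt_of_ne hne with hlt | hlt
    · exact (h'.lt_wval_of_lt_left x hlt h.coeff_left_ne_zero).ne' h.wval_left
    · exact (h.lt_wval_of_lt_left x' hlt h'.coeff_left_ne_zero).ne' h'.wval_left
  · by_contra hne
    rcases Nat.lt_or_gt_of_ne hne with hlt | hlt
    · exact (h.lt_wval_of_right_lt y' hlt h'.coeff_right_ne_zero).ne' h'.wval_right
    · exact (h'.lt_wval_of_right_lt y hlt h.coeff_right_ne_zero).ne' h.wval_right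

theorem right_le_left_of_lt {L' : ℕ} (h : NewtonFace p L P m x y)
    (h' : NewtonFace p L' P m' x' y') (hL : L < L') : y ≤ x' := by
  by_contra! hxy
  have h₁ := h.wval_right ▸ h.le_wval x' h'.coeff_left_ne_zero
  have h₂ := h'.wval_left ▸ h'.le_wval y h.coeff_right_ne_zero
  simp only [wval] at h₁ h₂
  have hxy' : (x' : ℤ) < y := by exact_mod_cast hxy
  have hL' : (L : ℤ) < L' := by exact_mod_cast hL
  nlinarith

theorem dvd_sub (h : NewtonFace p L P m x y) : L ∣ y - x := by
  have hxy := h.left_le_right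
  have h₁ := h.wval_left
  have h₂ := h.wval_right
  simp only [wval] at h₁ h₂
  have : ((y - x : ℕ) : ℤ) = L * (padicValRat p (P.coeff x) - padicValRat p (P.coeff y)) := by
    push_cast [hxy]; linarith
  exact Int.natCast_dvd_natCast.mp ⟨_, this⟩

end NewtonFace

theorem newtonFace_monomial (L k : ℕ) {a : ℚ} (ha : a ≠ 0) :
    NewtonFace p L (monomial k a) (L * padicValRat p a + k) k k := by
  have hsupp : ∀ j, (monomial k a).coeff j ≠ 0 → j = k := fun j hj => by
    by_contra hjk
    exact hj (coeff_monomial_of_ne _ hjk)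
  refine ⟨fun j hj => ?_, by simpa using ha, by simp [wval], by simpa using ha, by simp [wval],
    fun j hj hne => absurd (hsupp j hne) hj.ne, fun j hj hne => absurd (hsupp j hne) hj.ne'⟩
  obtain rfl := hsupp j hj
  simp [wval]

theorem newtonFace_C (L : ℕ) {a : ℚ} (ha : a ≠ 0) :
    NewtonFace p L (C a) (L * padicValRat p a) 0 0 := by
  simpa using newtonFace_monomial (p := p) L 0 ha

theorem newtonFace_X (L : ℕ) : NewtonFace p L (X : ℚ[X]) 1 1 1 := by
  simpa [monomial_one_one_eq_X] using newtonFace_monomial (p := p) L 1 one_ne_zero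

theorem exists_newtonFace (p L : ℕ) (hP : P ≠ 0) : ∃ m x y, NewtonFace p L P m x y := by
  classical
  obtain ⟨j₀, hj₀, hmin⟩ :=
    P.support.exists_min_image (wval p L P) (nonempty_support_iff.mpr hP)
  set T := P.support.filter (fun j => wval p L P j = wval p L P j₀)
  have hT : T.Nonempty := ⟨j₀, Finset.mem_filter.mpr ⟨hj₀, rfl⟩⟩
  have hx := Finset.mem_filter.mp (T.min'_mem hT)
  have hy := Finset.mem_filter.mp (T.max'_mem hT)
  have hle : ∀ j, P.coeff j ≠ 0 → wval p L P j₀ ≤ wval p L P j :=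
    fun j hj => hmin j (mem_support_iff.mpr hj)
  have hlt : ∀ j, P.coeff j ≠ 0 → j ∉ T → wval p L P j₀ < wval p L P j := fun j hj hjT =>
    (hle j hj).lt_of_ne fun he => hjT (Finset.mem_filter.mpr ⟨mem_support_iff.mpr hj, he.symm⟩)
  refine ⟨_, T.min' hT, T.max' hT, hle, mem_support_iff.mp hx.1, hx.2,
    mem_support_iff.mp hy.1, hy.2, fun j hj hne => hlt j hne fun hjT => ?_,
    fun j hj hne => hlt j hne fun hjT => ?_⟩
  · exact (T.min'_le j hjT).not_gt hj
  · exact (T.le_max' j hjT).not_gt hj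

theorem NewtonFace.top_of_lt {L' : ℕ} (hP : P.Monic) (h : NewtonFace p L P m x P.natDegree)
    (hL : L < L') : NewtonFace p L' P P.natDegree P.natDegree P.natDegree := by
  obtain ⟨m', x', y', h'⟩ := exists_newtonFace p L' hP.ne_zero
  have := h.right_le_left_of_lt h' hL
  have := h'.left_le_right
  have := h'.right_le_natDegree
  obtain ⟨rfl, rfl⟩ : x' = P.natDegree ∧ y' = P.natDegree := by omega
  convert h'
  rw [← h'.wval_left, wval, coeff_natDegree, hP.leadingCoeff]
  simp

open Classical in
noncomputable def faceLength (p L : ℕ) (P : ℚ[X]) : ℕ :=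
  if h : ∃ t : ℤ × ℕ × ℕ, NewtonFace p L P t.1 t.2.1 t.2.2 then h.choose.2.2 - h.choose.2.1
  else 0

theorem NewtonFace.faceLength_eq (h : NewtonFace p L P m x y) : faceLength p L P = y - x := by
  have hex : ∃ t : ℤ × ℕ × ℕ, NewtonFace p L P t.1 t.2.1 t.2.2 := ⟨(m, x, y), h⟩
  obtain ⟨hx, hy⟩ := hex.choose_spec.unique h
  simp only [faceLength, dif_pos hex, hx, hy]

theorem faceLength_C {a : ℚ} (ha : a ≠ 0) : faceLength p L (C a) = 0 := by
  simpa using (newtonFace_monomial (p := p) L 0 ha).faceLength_eq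

theorem faceLength_add_faceLength_add_faceLength_le {L₁ L₂ L₃ : ℕ} (h₁₂ : L₁ < L₂)
    (h₂₃ : L₂ < L₃) (hP : P ≠ 0) :
    faceLength p L₁ P + faceLength p L₂ P + faceLength p L₃ P ≤ P.natDegree := by
  obtain ⟨_, x₁, y₁, f₁⟩ := exists_newtonFace p L₁ hP
  obtain ⟨_, x₂, y₂, f₂⟩ := exists_newtonFace p L₂ hP
  obtain ⟨_, x₃, y₃, f₃⟩ := exists_newtonFace p L₃ hP
  rw [f₁.faceLength_eq, f₂.faceLength_eq, f₃.faceLength_eq]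
  have := f₁.right_le_left_of_lt f₂ h₁₂
  have := f₂.right_le_left_of_lt f₃ h₂₃
  have := f₁.left_le_right
  have := f₂.left_le_right
  have := f₃.left_le_right
  have := f₃.right_le_natDegree
  omega

/-- The Newton polygon of `P` begins with three consecutive edges from index `0`, the `i`-th of
horizontal length `Lᵢ` and slope `-1/Lᵢ`. -/
def HasThreeFaces (p L₁ L₂ L₃ : ℕ) (P : ℚ[X]) : Prop :=
  (∃ m, NewtonFace p L₁ P m 0 L₁) ∧ (∃ m, NewtonFace p L₂ P m L₁ (L₁ + L₂)) ∧
    ∃ m, NewtonFace p L₃ P m (L₁ + L₂) (L₁ + L₂ + L₃)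

section Prime

variable [Fact p.Prime]

theorem wval_coeff_mul_coeff {u v : ℕ} (hu : P.coeff u ≠ 0) (hv : Q.coeff v ≠ 0) :
    L * padicValRat p (P.coeff u * Q.coeff v) + (u + v : ℕ) = wval p L P u + wval p L Q v := by
  rw [padicValRat.mul hu hv]; simp only [wval]; push_cast; ring

theorem exists_wval_add_le_wval_mul (hj : (P * Q).coeff j ≠ 0) :
    ∃ u v, u + v = j ∧ P.coeff u ≠ 0 ∧ Q.coeff v ≠ 0 ∧
      wval p L P u + wval p L Q v ≤ wval p L (P * Q) j := by
  rw [coeff_mul] at hj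
  obtain ⟨⟨u, v⟩, huv, hne, hle⟩ := padicValRat.exists_le_sum (p := p) hj
  rw [Finset.HasAntidiagonal.mem_antidiagonal] at huv
  refine ⟨u, v, huv, left_ne_zero_of_mul hne, right_ne_zero_of_mul hne, ?_⟩
  rw [← wval_coeff_mul_coeff (left_ne_zero_of_mul hne) (right_ne_zero_of_mul hne), huv, wval,
    coeff_mul]
  gcongr

theorem coeff_mul_ne_zero_and_wval_eq {u₀ v₀ : ℕ} (hu₀ : P.coeff u₀ ≠ 0) (hv₀ : Q.coeff v₀ ≠ 0)
    (hlt : ∀ u v, u + v = u₀ + v₀ → (u, v) ≠ (u₀, v₀) → P.coeff u ≠ 0 → Q.coeff v ≠ 0 →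
      wval p L P u₀ + wval p L Q v₀ < wval p L P u + wval p L Q v) :
    (P * Q).coeff (u₀ + v₀) ≠ 0 ∧
      wval p L (P * Q) (u₀ + v₀) = wval p L P u₀ + wval p L Q v₀ := by
  classical
  have key := padicValRat.sum_eq_of_forall_lt (p := p)
    (f := fun z : ℕ × ℕ => P.coeff z.1 * Q.coeff z.2)
    (i₀ := (u₀, v₀)) (s := Finset.HasAntidiagonal.antidiagonal (u₀ + v₀))
    (Finset.HasAntidiagonal.mem_antidiagonal.mpr rfl) (mul_ne_zero hu₀ hv₀)
    fun ⟨u, v⟩ huv hne h => by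
      rw [Finset.HasAntidiagonal.mem_antidiagonal] at huv
      have hlt' := hlt u v huv hne (left_ne_zero_of_mul h) (right_ne_zero_of_mul h)
      rw [← wval_coeff_mul_coeff hu₀ hv₀,
        ← wval_coeff_mul_coeff (left_ne_zero_of_mul h) (right_ne_zero_of_mul h), huv] at hlt'
      exact lt_of_mul_lt_mul_left (add_lt_add_iff_right _ |>.mp hlt') (Int.natCast_nonneg L)
  rw [← coeff_mul] at key
  refine ⟨key.1, ?_⟩
  rw [← wval_coeff_mul_coeff hu₀ hv₀, wval, key.2]

theorem NewtonFace.mul (hP : NewtonFace p L P m x y) (hQ : NewtonFace p L Q m' x' y') :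
    NewtonFace p L (P * Q) (m + m') (x + x') (y + y') := by
  have lt_of_lt_or_lt : ∀ j, (P * Q).coeff j ≠ 0 →
      (∀ u v, u + v = j → P.coeff u ≠ 0 → Q.coeff v ≠ 0 → u < x ∨ v < x' ∨ y < u ∨ y' < v) →
      m + m' < wval p L (P * Q) j := fun j hj hout => by
    obtain ⟨u, v, huv, hu, hv, hle⟩ := exists_wval_add_le_wval_mul (p := p) (L := L) hj
    refine lt_of_lt_of_le ?_ hle
    rcases hout u v huv hu hv with h | h | h | h
    · exact add_lt_add_of_lt_of_le (hP.lt_wval_of_lt_left u h hu) (hQ.le_wval v hv)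
    · exact add_lt_add_of_le_of_lt (hP.le_wval u hu) (hQ.lt_wval_of_lt_left v h hv)
    · exact add_lt_add_of_lt_of_le (hP.lt_wval_of_right_lt u h hu) (hQ.le_wval v hv)
    · exact add_lt_add_of_le_of_lt (hP.le_wval u hu) (hQ.lt_wval_of_right_lt v h hv)
  have left := coeff_mul_ne_zero_and_wval_eq (p := p) (L := L) hP.coeff_left_ne_zero
    hQ.coeff_left_ne_zero fun u v huv hne hu hv => by
      rw [hP.wval_left, hQ.wval_left]
      rcases Nat.lt_or_ge u x with h | h
      · exact add_lt_add_of_lt_of_le (hP.lt_wval_of_lt_left u h hu) (hQ.le_wval v hv)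
      · refine add_lt_add_of_le_of_lt (hP.le_wval u hu) (hQ.lt_wval_of_lt_left v ?_ hv)
        grind
  have right := coeff_mul_ne_zero_and_wval_eq (p := p) (L := L) hP.coeff_right_ne_zero
    hQ.coeff_right_ne_zero fun u v huv hne hu hv => by
      rw [hP.wval_right, hQ.wval_right]
      rcases Nat.lt_or_ge y u with h | h
      · exact add_lt_add_of_lt_of_le (hP.lt_wval_of_right_lt u h hu) (hQ.le_wval v hv)
      · refine add_lt_add_of_le_of_lt (hP.le_wval u hu) (hQ.lt_wval_of_right_lt v ?_ hv)
        grind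
  refine ⟨fun j hj => ?_, left.1, by rw [left.2, hP.wval_left, hQ.wval_left], right.1,
    by rw [right.2, hP.wval_right, hQ.wval_right],
    fun j hj hne => lt_of_lt_or_lt j hne fun u v huv _ _ => by omega,
    fun j hj hne => lt_of_lt_or_lt j hne fun u v huv _ _ => by omega⟩
  obtain ⟨u, v, -, hu, hv, hle⟩ := exists_wval_add_le_wval_mul (p := p) (L := L) hj
  exact (add_le_add (hP.le_wval u hu) (hQ.le_wval v hv)).trans hle

theorem NewtonFace.pow (h : NewtonFace p L P m x y) (k : ℕ) :
    NewtonFace p L (P ^ k) (k * m) (k * x) (k * y) := by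
  induction k with
  | zero => simpa using newtonFace_monomial (p := p) L 0 one_ne_zero
  | succ k ih => simpa [pow_succ, add_mul] using ih.mul h

theorem NewtonFace.C_mul_pow (h : NewtonFace p L P m x x) {a : ℚ} (ha : a ≠ 0) (k : ℕ) :
    NewtonFace p L (C a * P ^ k) (L * padicValRat p a + k * m) (k * x) (k * x) := by
  simpa using (newtonFace_C L ha).mul (h.pow k)

theorem wval_add_ge_of_ge (hP : P.coeff j ≠ 0 → m ≤ wval p L P j)
    (hQ : Q.coeff j ≠ 0 → m ≤ wval p L Q j) (hj : (P + Q).coeff j ≠ 0) :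
    m ≤ wval p L (P + Q) j := by
  rw [coeff_add] at hj
  by_cases hPj : P.coeff j = 0
  · simpa [wval, hPj] using hQ (by simpa [hPj] using hj)
  by_cases hQj : Q.coeff j = 0
  · simpa [wval, hQj] using hP hPj
  have hmin := padicValRat.min_le_padicValRat_add (p := p) hj
  have hL : (0 : ℤ) ≤ L := Int.natCast_nonneg L
  rcases min_le_iff.mp hmin with h | h
  · exact (hP hPj).trans (by simp only [wval, coeff_add]; gcongr)
  · exact (hQ hQj).trans (by simp only [wval, coeff_add]; gcongr)

theorem wval_add_gt_of_gt (hP : P.coeff j ≠ 0 → m < wval p L P j)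
    (hQ : Q.coeff j ≠ 0 → m < wval p L Q j) (hj : (P + Q).coeff j ≠ 0) :
    m < wval p L (P + Q) j :=
  -- in `ℤ`, `m < w` unfolds to `m + 1 ≤ w`
  wval_add_ge_of_ge (m := m + 1) (fun h => hP h) (fun h => hQ h) hj

theorem coeff_add_ne_zero_and_wval_eq (hP : P.coeff j ≠ 0)
    (hQ : Q.coeff j ≠ 0 → wval p L P j < wval p L Q j) :
    (P + Q).coeff j ≠ 0 ∧ wval p L (P + Q) j = wval p L P j := by
  by_cases hQj : Q.coeff j = 0
  · simpa [wval, hQj] using hP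
  have hv : padicValRat p (P.coeff j) < padicValRat p (Q.coeff j) := by
    have := hQ hQj
    simp only [wval] at this
    exact lt_of_mul_lt_mul_left (by linarith) (Int.natCast_nonneg L)
  have hne : P.coeff j + Q.coeff j ≠ 0 := fun h => by
    rw [add_eq_zero_iff_eq_neg.mp h, padicValRat.neg] at hv
    exact hv.false
  rw [coeff_add]
  exact ⟨hne, by simp only [wval, coeff_add, padicValRat.add_eq_of_lt hne hP hQj hv]⟩

theorem NewtonFace.add_of_forall_lt (hP : NewtonFace p L P m x y)
    (hQ : ∀ j, Q.coeff j ≠ 0 → m < wval p L Q j) : NewtonFace p L (P + Q) m x y := by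
  have left := coeff_add_ne_zero_and_wval_eq (p := p) (L := L) hP.coeff_left_ne_zero
    fun h => hP.wval_left ▸ hQ x h
  have right := coeff_add_ne_zero_and_wval_eq (p := p) (L := L) hP.coeff_right_ne_zero
    fun h => hP.wval_right ▸ hQ y h
  refine ⟨fun j => wval_add_ge_of_ge (hP.le_wval j) fun h => (hQ j h).le, left.1,
    left.2.trans hP.wval_left, right.1, right.2.trans hP.wval_right,
    fun j hj => wval_add_gt_of_gt (hP.lt_wval_of_lt_left j hj) (hQ j),
    fun j hj => wval_add_gt_of_gt (hP.lt_wval_of_right_lt j hj) (hQ j)⟩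

theorem NewtonFace.add_of_lt (hP : NewtonFace p L P m x y) (hQ : NewtonFace p L Q m' x' y')
    (hm : m < m') : NewtonFace p L (P + Q) m x y :=
  hP.add_of_forall_lt fun j hj => hm.trans_le (hQ.le_wval j hj)

theorem NewtonFace.add (hP : NewtonFace p L P m x y) (hQ : NewtonFace p L Q m' x' y')
    (hm : m = m') (hyx : y < x') : NewtonFace p L (P + Q) m x y' := by
  subst hm
  have hxy := hP.left_le_right
  have hxy' := hQ.left_le_right
  have left := coeff_add_ne_zero_and_wval_eq (p := p) (L := L) hP.coeff_left_ne_zero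
    fun h => hP.wval_left ▸ hQ.lt_wval_of_lt_left x (by omega) h
  have right := coeff_add_ne_zero_and_wval_eq (p := p) (L := L) hQ.coeff_right_ne_zero
    fun h => hQ.wval_right ▸ hP.lt_wval_of_right_lt y' (by omega) h
  rw [add_comm Q] at right
  refine ⟨fun j => wval_add_ge_of_ge (hP.le_wval j) (hQ.le_wval j), left.1,
    left.2.trans hP.wval_left, right.1, right.2.trans hQ.wval_right,
    fun j hj => wval_add_gt_of_gt (hP.lt_wval_of_lt_left j hj)
      (hQ.lt_wval_of_lt_left j (by omega)),
    fun j hj => wval_add_gt_of_gt (hP.lt_wval_of_right_lt j (by omega))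
      (hQ.lt_wval_of_right_lt j hj)⟩

theorem faceLength_mul (hP : P ≠ 0) (hQ : Q ≠ 0) :
    faceLength p L (P * Q) = faceLength p L P + faceLength p L Q := by
  obtain ⟨m, x, y, h⟩ := exists_newtonFace p L hP
  obtain ⟨m', x', y', h'⟩ := exists_newtonFace p L hQ
  rw [(h.mul h').faceLength_eq, h.faceLength_eq, h'.faceLength_eq]
  have := h.left_le_right
  have := h'.left_le_right
  omega

theorem faceLength_multiset_prod {S : Multiset ℚ[X]} (hS : (0 : ℚ[X]) ∉ S) :
    faceLength p L S.prod = (S.map (faceLength p L)).sum := by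
  induction S using Multiset.induction_on with
  | empty => simpa using faceLength_C (p := p) (L := L) one_ne_zero
  | cons Q S ih =>
    rw [Multiset.mem_cons, not_or] at hS
    rw [Multiset.prod_cons, faceLength_mul (Ne.symm hS.1) (Multiset.prod_ne_zero hS.2),
      ih hS.2, Multiset.map_cons, Multiset.sum_cons]

theorem Associated.faceLength_eq (h : Associated P Q) (hP : P ≠ 0) :
    faceLength p L P = faceLength p L Q := by
  obtain ⟨u, rfl⟩ := h
  obtain ⟨r, hr, hu⟩ := Polynomial.isUnit_iff.mp u.isUnit
  rw [← hu, faceLength_mul hP (C_ne_zero.mpr hr.ne_zero), faceLength_C hr.ne_zero, add_zero]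

/-- Each face has no lattice point in its interior, so an irreducible factor either owns the
whole face or none of it. -/
theorem numFactors_le_three {L₁ L₂ L₃ : ℕ} (h₁₂ : L₁ < L₂) (h₂₃ : L₂ < L₃)
    (hP : HasThreeFaces p L₁ L₂ L₃ P) (hdeg : P.natDegree = L₁ + L₂ + L₃) : numFactors P ≤ 3 := by
  obtain ⟨⟨_, f₁⟩, ⟨_, f₂⟩, ⟨_, f₃⟩⟩ := hP
  set F := UniqueFactorizationMonoid.factors P
  have hP0 : P ≠ 0 := f₁.ne_zero
  have hF : (0 : ℚ[X]) ∉ F := fun h => not_irreducible_zero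
    (UniqueFactorizationMonoid.irreducible_of_factor 0 h)
  have hassoc : Associated F.prod P := UniqueFactorizationMonoid.factors_prod hP0
  have hlen : ∀ {L x y m}, NewtonFace p L P m x y → (F.map (faceLength p L)).sum = y - x :=
    fun f => by rw [← faceLength_multiset_prod hF, hassoc.faceLength_eq (Multiset.prod_ne_zero hF),
      f.faceLength_eq]
  have hdegF : (F.map natDegree).sum = L₁ + L₂ + L₃ := by
    rw [← natDegree_multiset_prod F hF, natDegree_eq_of_degree_eq
      (degree_eq_degree_of_associated hassoc), hdeg]
  have hfactor : ∀ Q ∈ F,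
      faceLength p L₁ Q + faceLength p L₂ Q + faceLength p L₃ Q = Q.natDegree := by
    refine Multiset.forall_eq_of_forall_le_of_sum_eq (fun Q hQ =>
      faceLength_add_faceLength_add_faceLength_le h₁₂ h₂₃ (ne_of_mem_of_not_mem hQ hF)) ?_
    rw [hdegF, Multiset.sum_map_add, Multiset.sum_map_add, hlen f₁, hlen f₂, hlen f₃]
    omega
  refine Multiset.card_le_of_sum_eq_of_dvd (S := F) (fun i => faceLength p (![L₁, L₂, L₃] i))
    ![L₁, L₂, L₃] ?_ ?_ ?_
  · intro i
    fin_cases i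
    · simpa using hlen f₁
    · simpa using hlen f₂
    · simpa using hlen f₃
  · intro i Q hQ
    obtain ⟨_, x, y, f⟩ := exists_newtonFace p (![L₁, L₂, L₃] i) (ne_of_mem_of_not_mem hQ hF)
    exact f.faceLength_eq ▸ f.dvd_sub
  · intro Q hQ
    have hpos := (UniqueFactorizationMonoid.irreducible_of_factor Q hQ).natDegree_pos
    by_contra! h0
    have h₁ : faceLength p L₁ Q = 0 := h0 0
    have h₂ : faceLength p L₂ Q = 0 := h0 1
    have h₃ : faceLength p L₃ Q = 0 := h0 2
    have := hfactor Q hQ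
    omega

end Prime

end NewtonPolygon

section Iterates

variable {f : ℚ[X]}

theorem natDegree_polyIter_s19 (f : ℚ[X]) (k : ℕ) : (polyIter f k).natDegree = f.natDegree ^ k := by
  induction k with
  | zero => simp [polyIter]
  | succ k ih => rw [polyIter, natDegree_comp, ih, pow_succ']

theorem monic_polyIter (hf : f.Monic) (hdeg : f.natDegree ≠ 0) (k : ℕ) : (polyIter f k).Monic := by
  induction k with
  | zero => exact monic_X
  | succ k ih => exact hf.comp ih (by rw [natDegree_polyIter_s19]; exact pow_ne_zero k hdeg)

theorem eval_polyIter_succ (f : ℚ[X]) (k : ℕ) (x : ℚ) :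
    (polyIter f (k + 1)).eval x = f.eval ((polyIter f k).eval x) :=
  eval_comp

end Iterates

noncomputable def sookdeoPoly (n : ℕ) (A B C' : ℚ) : ℚ[X] :=
  X ^ (3 * n) + C A * X ^ (2 * n - 2) + C B * X ^ (n - 2) + C C'

section SookdeoPoly

variable {p n : ℕ} {A B C' : ℚ}

theorem natDegree_sookdeoPoly (hn : 3 ≤ n) : (sookdeoPoly n A B C').natDegree = 3 * n := by
  unfold sookdeoPoly
  compute_degree!
  · rw [if_neg (by omega), if_neg (by omega), if_neg (by omega)]; norm_num
  all_goals omega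

theorem monic_sookdeoPoly (hn : 3 ≤ n) : (sookdeoPoly n A B C').Monic := by
  unfold sookdeoPoly
  monicity!
  rw [if_pos (by omega), if_neg (by omega), if_neg (by omega), if_neg (by omega)]; norm_num

theorem sookdeoPoly_comp (h : ℚ[X]) : (sookdeoPoly n A B C').comp h =
    h ^ (3 * n) + C A * h ^ (2 * n - 2) + C B * h ^ (n - 2) + C C' := by
  simp [sookdeoPoly]

theorem edge_lengths_sum (hn : 2 ≤ n) (E : ℕ) :
    (n - 2) * E + n * E + (n + 2) * E = 3 * n * E := by
  zify [hn]; ring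

variable [Fact p.Prime]

/-- At each of the three weights, two consecutive terms of `g ∘ h` have their vertices at the
least level and span the edge, while the other two terms lie strictly above it. -/
theorem hasThreeFaces_sookdeoPoly_comp {E : ℕ} (hn : 3 ≤ n) (hE : 0 < E)
    (vA : padicValRat p A = 1) (vB : padicValRat p B = 2) (vC : padicValRat p C' = 3) {h : ℚ[X]}
    (htop : ∀ L, (n - 2) * E ≤ L → NewtonFace p L h E E E) :
    HasThreeFaces p ((n - 2) * E) (n * E) ((n + 2) * E) ((sookdeoPoly n A B C').comp h) := by
  rw [sookdeoPoly_comp]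
  have hA : A ≠ 0 := by rintro rfl; simp at vA
  have hB : B ≠ 0 := by rintro rfl; simp at vB
  have hC : C' ≠ 0 := by rintro rfl; simp at vC
  obtain ⟨k, rfl⟩ : ∃ k, n = k + 3 := ⟨n - 3, by omega⟩
  rw [show k + 3 - 2 = k + 1 by omega] at htop ⊢
  rw [show 2 * (k + 3) - 2 = 2 * k + 4 by omega]
  have hEq : (0 : ℤ) < E := by exact_mod_cast hE
  have hkE : (0 : ℤ) ≤ k * E := by positivity
  have hle : ∀ c, k + 1 ≤ c → (k + 1) * E ≤ c * E := fun c hc => Nat.mul_le_mul_right _ hc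
  have T₁ := fun c hc => (htop _ (hle c hc)).pow (3 * (k + 3))
  have T₂ := fun c hc => (htop _ (hle c hc)).C_mul_pow hA (2 * k + 4)
  have T₃ := fun c hc => (htop _ (hle c hc)).C_mul_pow hB (k + 1)
  have T₄ := fun c => newtonFace_C (p := p) (c * E) hC
  simp only [vA, vB, vC] at T₂ T₃ T₄
  refine ⟨?_, ?_, ?_⟩
  · have F := (((T₄ (k + 1)).add (T₃ (k + 1) le_rfl) ?_ ?_).add_of_lt
      (T₁ (k + 1) le_rfl) ?_).add_of_lt (T₂ (k + 1) le_rfl) ?_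
    · exact ⟨_, by convert F using 1; ring⟩
    all_goals push_cast; nlinarith
  · have F := (((T₃ (k + 3) (by omega)).add (T₂ (k + 3) (by omega)) ?_ ?_).add_of_lt
      (T₁ (k + 3) (by omega)) ?_).add_of_lt (T₄ (k + 3)) ?_
    · exact ⟨_, by convert F using 1 <;> ring⟩
    all_goals push_cast; nlinarith
  · have F := (((T₂ (k + 5) (by omega)).add (T₁ (k + 5) (by omega)) ?_ ?_).add_of_lt
      (T₃ (k + 5) (by omega)) ?_).add_of_lt (T₄ (k + 5)) ?_
    · exact ⟨_, by convert F using 1 <;> ring⟩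
    all_goals push_cast; nlinarith

theorem newtonFace_polyIter_sookdeoPoly (hn : 3 ≤ n) (vA : padicValRat p A = 1)
    (vB : padicValRat p B = 2) (vC : padicValRat p C' = 3) (k : ℕ) :
    ∀ L, (n - 2) * (3 * n) ^ k ≤ L → NewtonFace p L (polyIter (sookdeoPoly n A B C') k)
      ((3 * n) ^ k : ℕ) ((3 * n) ^ k) ((3 * n) ^ k) := by
  have hdeg : ∀ k, (polyIter (sookdeoPoly n A B C') k).natDegree = (3 * n) ^ k := fun k => by
    rw [natDegree_polyIter_s19, natDegree_sookdeoPoly hn]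
  induction k with
  | zero => simpa [polyIter] using fun L _ => newtonFace_X (p := p) L
  | succ k ih =>
    obtain ⟨-, -, m, f₃⟩ := hasThreeFaces_sookdeoPoly_comp hn (by positivity) vA vB vC ih
    rw [edge_lengths_sum (by omega), ← pow_succ', ← hdeg (k + 1)] at f₃
    intro L hL
    rw [← hdeg (k + 1)]
    refine f₃.top_of_lt (monic_polyIter (monic_sookdeoPoly hn) ?_ _) (lt_of_lt_of_le ?_ hL)
    · rw [natDegree_sookdeoPoly hn]; omega
    · have : 0 < (3 * n) ^ k := by positivity
      rw [pow_succ]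
      zify [show 2 ≤ n by omega] at this hn ⊢
      nlinarith [mul_pos this (show (0 : ℤ) < 3 * n ^ 2 - 7 * n - 2 by nlinarith)]

theorem numFactors_polyIter_sookdeoPoly_le_three (hn : 3 ≤ n) (vA : padicValRat p A = 1)
    (vB : padicValRat p B = 2) (vC : padicValRat p C' = 3) (k : ℕ) :
    numFactors (polyIter (sookdeoPoly n A B C') (k + 1)) ≤ 3 := by
  have hE : 0 < (3 * n) ^ k := by positivity
  refine numFactors_le_three (Nat.mul_lt_mul_of_pos_right (by omega) hE)
    (Nat.mul_lt_mul_of_pos_right (by omega) hE) (hasThreeFaces_sookdeoPoly_comp hn hE vA vB vC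
      (newtonFace_polyIter_sookdeoPoly hn vA vB vC k)) ?_
  rw [natDegree_polyIter_s19, natDegree_sookdeoPoly hn, edge_lengths_sum (by omega), pow_succ',
    mul_assoc]

end SookdeoPoly

section Orbit

variable {n : ℕ} {A B C' : ℚ}

theorem lt_eval_sookdeoPoly (hA : 0 ≤ A) (hB : 0 ≤ B) (hC : 1 ≤ C') (hn : 1 ≤ n) {x : ℚ}
    (hx : 0 ≤ x) : x < (sookdeoPoly n A B C').eval x := by
  simp only [sookdeoPoly, eval_add, eval_mul, eval_pow, eval_C, eval_X]
  have : 0 ≤ A * x ^ (2 * n - 2) + B * x ^ (n - 2) := by positivity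
  rcases le_or_gt 1 x with h1 | h1
  · linarith [le_self_pow₀ h1 (show 3 * n ≠ 0 by omega)]
  · linarith [pow_nonneg hx (3 * n)]

theorem eval_zero_sookdeoPoly (hn : 3 ≤ n) : (sookdeoPoly n A B C').eval 0 = C' := by
  simp [sookdeoPoly, show 3 * n ≠ 0 by omega, show 2 * n - 2 ≠ 0 by omega,
    show n - 2 ≠ 0 by omega]

theorem eval_zero_polyIter_sookdeoPoly_lt_succ (hA : 0 ≤ A) (hB : 0 ≤ B) (hC : 1 ≤ C')
    (hn : 1 ≤ n) (k : ℕ) :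
    (polyIter (sookdeoPoly n A B C') k).eval 0 <
      (polyIter (sookdeoPoly n A B C') (k + 1)).eval 0 := by
  have step : ∀ k, 0 ≤ (polyIter (sookdeoPoly n A B C') k).eval 0 →
      (polyIter (sookdeoPoly n A B C') k).eval 0 <
        (polyIter (sookdeoPoly n A B C') (k + 1)).eval 0 := fun k hk => by
    rw [eval_polyIter_succ]
    exact lt_eval_sookdeoPoly hA hB hC hn hk
  refine step k ?_
  induction k with
  | zero => simp [polyIter]
  | succ k ih => exact ih.trans (step k ih).le

end Orbit

theorem padicValRat_prime_pow_mul {p : ℕ} [hp : Fact p.Prime] {x : ℚ} (hx : x ≠ 0)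
    (hv : padicValRat p x = 0) (k : ℕ) : padicValRat p ((p : ℚ) ^ k * x) = k := by
  rw [padicValRat.mul (pow_ne_zero k (by exact_mod_cast hp.out.ne_zero)) hx, padicValRat.pow,
    padicValRat.self hp.out.one_lt, hv, mul_one, add_zero]

theorem sookdeo_family_general
    (n : ℕ) (hn : 3 ≤ n) (a b : ℚ) (ha : 0 < a) (hb : 0 < b)
    (hva : padicValRat 2 a = 0) (hvb : padicValRat 2 b = 0)
    (c : ℕ) (hc : Odd c)
    (g : Polynomial ℚ)
    (hg : g = Polynomial.X ^ (3 * n) + Polynomial.C (2 * a) * Polynomial.X ^ (2 * n - 2) +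
      Polynomial.C (4 * b) * Polynomial.X ^ (n - 2) + Polynomial.C (8 * (c : ℚ))) :
    (∃ C : ℕ, ∀ k : ℕ, 1 ≤ k → numFactors (polyIter g k) ≤ C) ∧
    (∀ k : ℕ, 1 ≤ k → numFactors (polyIter g k) ≤ 3) ∧
    (8 : ℚ) ≤ (polyIter g 1).eval 0 ∧
    (∀ k : ℕ, 1 ≤ k → (polyIter g k).eval 0 < (polyIter g (k + 1)).eval 0) := by
  have hc₀ : (c : ℚ) ≠ 0 := by exact_mod_cast hc.pos.ne'
  have hc₈ : (8 : ℚ) ≤ 8 * c := by exact_mod_cast (show 8 ≤ 8 * c by have := hc.pos; omega)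
  have hvc : padicValRat 2 (c : ℚ) = 0 := by
    simpa using padicValNat.eq_zero_of_not_dvd hc.not_two_dvd_nat
  have vA := padicValRat_prime_pow_mul (p := 2) ha.ne' hva 1
  have vB := padicValRat_prime_pow_mul (p := 2) hb.ne' hvb 2
  have vC := padicValRat_prime_pow_mul (p := 2) hc₀ hvc 3
  norm_num at vA vB vC
  obtain rfl : g = sookdeoPoly n (2 * a) (4 * b) (8 * c) := hg
  have hcount : ∀ k, 1 ≤ k →
      numFactors (polyIter (sookdeoPoly n (2 * a) (4 * b) (8 * c)) k) ≤ 3 := fun k hk => by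
    obtain ⟨k, rfl⟩ := Nat.exists_eq_add_of_le' hk
    exact numFactors_polyIter_sookdeoPoly_le_three hn vA vB vC k
  refine ⟨⟨3, hcount⟩, hcount, ?_, fun k _ => eval_zero_polyIter_sookdeoPoly_lt_succ
    (by positivity) (by positivity) (by linarith) (by omega) k⟩
  rwa [eval_polyIter_succ, polyIter, eval_X, eval_zero_sookdeoPoly hn]

/-- Section 6.5: an explicit family satisfying Sookdeo's conjecture. -/
theorem sookdeo_family
    (n : ℕ) (hn : 3 ≤ n) (a b : ℚ) (ha : 0 < a) (hb : 0 < b)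
    (hva : padicValRat 2 a = 0) (hvb : padicValRat 2 b = 0)
    (c : ℕ) (hc : Odd c) (hcpos : 0 < c)
    (g : Polynomial ℚ)
    (hg : g = Polynomial.X ^ (3 * n) + Polynomial.C (2 * a) * Polynomial.X ^ (2 * n - 2) +
      Polynomial.C (4 * b) * Polynomial.X ^ (n - 2) + Polynomial.C (8 * (c : ℚ))) :
    (∃ C : ℕ, ∀ k : ℕ, 1 ≤ k → numFactors (polyIter g k) ≤ C) ∧
    (∀ k : ℕ, 1 ≤ k → numFactors (polyIter g k) ≤ 3) ∧
    (8 : ℚ) ≤ (polyIter g 1).eval 0 ∧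
    (∀ k : ℕ, 1 ≤ k → (polyIter g k).eval 0 < (polyIter g (k + 1)).eval 0) :=
  sookdeo_family_general n hn a b ha hb hva hvb c hc g hg
end
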